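/- arXiv:2311.04086 — 7 statements merged into one kernel-verified Lean document; each statement's English description precedes it below -/
import Mathlib

section
/- For every even positive integer a, the maximum number of triples in a packing on an a-element set (a family of 3-element subsets in which every pair of elements is contained in at most one triple) equals floor((a/3)·floor((a-1)/2)). -/
open Finset

/-- `T` is a family of 3-element subsets of `A`. -/
def IsTripleFamily {α : Type*} [DecidableEq α] (A : Finset α) (T : Finset (Finset α)) : Prop :=
  ∀ t ∈ T, t ⊆ A ∧ t.card = 3

/-- The 2-element subsets of `A` not contained in any member of `T`. -/
def uncoveredPairs {α : Type*} [DecidableEq α] (A : Finset α) (T : Finset (Finset α)) :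
    Finset (Finset α) :=
  (A.powersetCard 2).filter fun p => ∀ t ∈ T, ¬ p ⊆ t

/-- The weight of a triple family: number of triples plus half the number of uncovered pairs. -/
def weight {α : Type*} [DecidableEq α] (A : Finset α) (T : Finset (Finset α)) : ℚ :=
  T.card + (uncoveredPairs A T).card / 2

/-- `C_*(a)`: the minimum weight of a triple family on an `a`-element set
(computed as half the minimum of the doubled weights, which are natural numbers). -/
noncomputable def Cstar2 (a : ℕ) : ℕ :=
  sInf {n : ℕ | ∃ T : Finset (Finset ℕ), IsTripleFamily (Finset.range a) T ∧
      2 * T.card + (uncoveredPairs (Finset.range a) T).card = n}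

noncomputable def Cstar (a : ℕ) : ℚ := (Cstar2 a : ℚ) / 2

/-- `T` is a covering of the pairs of `A` by triples. -/
def IsCover {α : Type*} [DecidableEq α] (A : Finset α) (T : Finset (Finset α)) : Prop :=
  IsTripleFamily A T ∧ ∀ p ⊆ A, p.card = 2 → ∃ t ∈ T, p ⊆ t

/-- `C(a) = C(a,3,2)`: the minimum size of a covering of pairs by triples on `a` elements. -/
noncomputable def coverNum (a : ℕ) : ℕ :=
  sInf {n | ∃ T : Finset (Finset ℕ), IsCover (Finset.range a) T ∧ T.card = n}

/-- An `(A,B)`-system: a family of 4-element subsets of `A ∪ B` covering every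
3-element subset with at least two elements in `A`. -/
def IsABSystem {α : Type*} [DecidableEq α] (A B : Finset α) (Q : Finset (Finset α)) : Prop :=
  (∀ q ∈ Q, q ⊆ A ∪ B ∧ q.card = 4) ∧
  ∀ T ⊆ A ∪ B, T.card = 3 → 2 ≤ (T ∩ A).card → ∃ q ∈ Q, T ⊆ q

/-- `f(a,b)`: the minimum size of an `(A,B)`-system with `|A| = a`, `|B| = b`. -/
noncomputable def fAB (a b : ℕ) : ℕ :=
  sInf {n | ∃ Q : Finset (Finset ℕ),
    IsABSystem (Finset.range a) (Finset.Ico a (a + b)) Q ∧ Q.card = n}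


/-- A packing: a family of triples of `A` in which every pair lies in at most one triple. -/
def IsPacking {α : Type*} [DecidableEq α] (A : Finset α) (T : Finset (Finset α)) : Prop :=
  IsTripleFamily A T ∧ ∀ p ⊆ A, p.card = 2 → (T.filter fun t => p ⊆ t).card ≤ 1

/-!
Upper bound: the triples through a point `v` meet `A \ {v}` in pairwise disjoint pairs, so `v` lies
in at most `⌊(a - 1) / 2⌋` of them, and double counting gives `3 |T| ≤ a ⌊(a - 1) / 2⌋`.

Lower bound (Bose, Skolem): for a finite abelian group `X` and an injective `G : X → X`, the triples
`{(x, l), (y, l), (G (x + y), l + 1)}` with `x ≠ y` on `X × ℤ/3`, together with `{x} × ℤ/3` for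
every `x` with `G (x + x) = x`, pairwise share at most one point and cover every pair except the
edges `{(x, l), (G (x + x), l + 1)}` with `G (x + x) ≠ x`; counting pairs bounds their number below.
* `a = 6k`: `X = ℤ/2k` and `G` is Skolem's halving, with `G (x + x) = x` for the `k` residues `< k`;
* `a = 6k + 2`: Bose's Steiner triple system on `6k + 3` points (`X = ℤ/(2k+1)`, `G` halving) minus
  one point, which lies in at most `3k + 1` of its triples;
* `a = 6k + 4`: `X = ℤ/(2k+1)` and `G` is halving followed by a permutation fixing `0` and cycling
  the other residues; the uncovered edges then contain a matching of size `3k`, which is joined to a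
  new point.
-/

-- The packing condition in a form that needs no ground set, so that it moves along injective maps.
def IsLinear {α : Type*} [DecidableEq α] (T : Finset (Finset α)) : Prop :=
  (T : Set (Finset α)).Pairwise fun t t' => #(t ∩ t') ≤ 1

section Packing

variable {α : Type*} [DecidableEq α] {A : Finset α} {T : Finset (Finset α)}

theorem IsLinear.mono {T' : Finset (Finset α)} (hL : IsLinear T) (h : T' ⊆ T) : IsLinear T' :=
  Set.Pairwise.mono (coe_subset.2 h) hL

theorem IsLinear.isPacking (hT : IsTripleFamily A T) (hL : IsLinear T) : IsPacking A T := by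
  refine ⟨hT, fun p _ hp => card_le_one.2 fun t ht t' ht' => ?_⟩
  rw [mem_filter] at ht ht'
  by_contra hne
  have := card_le_card (subset_inter ht.2 ht'.2)
  have := hL ht.1 ht'.1 hne
  omega

theorem IsPacking.card_filter_mem_le (hT : IsPacking A T) {v : α} (hv : v ∈ A) :
    #{t ∈ T | v ∈ t} ≤ (#A - 1) / 2 := by
  set D := T.filter (v ∈ ·)
  have hdisj : (D : Set (Finset α)).PairwiseDisjoint (·.erase v) := by
    intro t ht t' ht' hne
    simp only [D, coe_filter, Set.mem_ofPred_eq] at ht ht'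
    refine disjoint_left.2 fun w hw hw' => hne ?_
    have hpair : ({v, w} : Finset α) ⊆ A := by
      simp [insert_subset_iff, hv, (hT.1 t ht.1).1 (mem_of_mem_erase hw)]
    exact card_le_one.1 (hT.2 _ hpair (card_pair (ne_of_mem_erase hw).symm)) t
      (by simp [ht.1, insert_subset_iff, ht.2, mem_of_mem_erase hw]) t'
      (by simp [ht'.1, insert_subset_iff, ht'.2, mem_of_mem_erase hw'])
  have hsub : D.biUnion (·.erase v) ⊆ A.erase v := by
    intro w hw
    obtain ⟨t, ht, hwt⟩ := mem_biUnion.1 hw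
    exact mem_erase.2 ⟨ne_of_mem_erase hwt, (hT.1 t (mem_filter.1 ht).1).1 (mem_of_mem_erase hwt)⟩
  have hpairs : ∀ t ∈ D, #(t.erase v) = 2 := fun t ht => by
    rw [card_erase_of_mem (mem_filter.1 ht).2, (hT.1 t (mem_filter.1 ht).1).2]
  have := card_le_card hsub
  rw [card_biUnion hdisj, sum_congr rfl hpairs, sum_const, smul_eq_mul,
    card_erase_of_mem hv] at this
  omega

theorem IsPacking.three_mul_card_le (hT : IsPacking A T) : 3 * #T ≤ #A * ((#A - 1) / 2) :=
  calc 3 * #T = ∑ t ∈ T, #(A ∩ t) := by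
        rw [sum_congr rfl fun t ht => by rw [inter_eq_right.2 (hT.1 t ht).1, (hT.1 t ht).2],
          sum_const, smul_eq_mul, mul_comm]
    _ ≤ #A * ((#A - 1) / 2) := sum_card_inter_le fun _ hv => hT.card_filter_mem_le hv

theorem IsPacking.card_sub_le_card_filter_notMem (hT : IsPacking A T) {v : α} (hv : v ∈ A) :
    #T - (#A - 1) / 2 ≤ #{t ∈ T | v ∉ t} := by
  have := card_filter_add_card_filter_not (s := T) (v ∈ ·)
  have := hT.card_filter_mem_le hv
  omega

theorem IsTripleFamily.filter_notMem (hT : IsTripleFamily A T) (v : α) :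
    IsTripleFamily (A.erase v) {t ∈ T | v ∉ t} := fun t ht =>
  ⟨fun _ hw => mem_erase.2 ⟨fun h => (mem_filter.1 ht).2 (h ▸ hw), (hT t (mem_filter.1 ht).1).1 hw⟩,
    (hT t (mem_filter.1 ht).1).2⟩

theorem choose_two_le_three_mul_card_add (hT : ∀ t ∈ T, #t = 3) {S : Finset (Finset α)}
    (hcov : ∀ p ∈ A.powersetCard 2, (∃ t ∈ T, p ⊆ t) ∨ p ∈ S) :
    (#A).choose 2 ≤ 3 * #T + #S :=
  calc (#A).choose 2 = #(A.powersetCard 2) := (card_powersetCard 2 A).symm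
    _ ≤ #(T.biUnion (·.powersetCard 2) ∪ S) := card_le_card fun p hp => by
        rcases hcov p hp with ⟨t, ht, hpt⟩ | hpS
        · exact mem_union_left _
            (mem_biUnion.2 ⟨t, ht, mem_powersetCard.2 ⟨hpt, (mem_powersetCard.1 hp).2⟩⟩)
        · exact mem_union_right _ hpS
    _ ≤ ∑ t ∈ T, #(t.powersetCard 2) + #S :=
        (card_union_le _ _).trans (by gcongr; exact card_biUnion_le)
    _ = 3 * #T + #S := by
        rw [sum_congr rfl fun t ht => by rw [card_powersetCard, hT t ht], sum_const, smul_eq_mul,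
          mul_comm]
        rfl

end Packing

section Transport

theorem Finset.exists_injOn_image_eq_range {α : Type*} (A : Finset α) :
    ∃ φ : α → ℕ, Set.InjOn φ A ∧ A.image φ = range #A := by
  classical
  let e := A.equivFin
  let φ : α → ℕ := fun a => if h : a ∈ A then e ⟨a, h⟩ else 0
  have hφ : Set.InjOn φ A := fun a ha b hb hab => by
    simpa [φ, mem_coe.1 ha, mem_coe.1 hb, Fin.val_inj] using hab
  refine ⟨φ, hφ, eq_of_subset_of_card_le (fun n hn => ?_) ?_⟩
  · obtain ⟨a, ha, rfl⟩ := mem_image.1 hn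
    simp [φ, ha]
  · rw [card_range, card_image_of_injOn hφ]

variable {α β : Type*} [DecidableEq α] [DecidableEq β] {A : Finset α} {T : Finset (Finset α)}

theorem IsLinear.image (hT : IsTripleFamily A T) (hL : IsLinear T) {φ : α → β}
    (hφ : Set.InjOn φ A) :
    IsTripleFamily (A.image φ) (T.image (·.image φ)) ∧ IsLinear (T.image (·.image φ)) ∧
      #(T.image (·.image φ)) = #T := by
  have hsub : ∀ t ∈ T, (t : Set α) ⊆ A := fun t ht => coe_subset.2 (hT t ht).1
  refine ⟨?_, ?_, card_image_of_injOn fun t ht t' ht' =>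
    image_injOn_powerset_of_injOn hφ (mem_powerset.2 (hT t ht).1) (mem_powerset.2 (hT t' ht').1)⟩
  · simp only [IsTripleFamily, forall_mem_image]
    exact fun t ht => ⟨image_subset_image (hT t ht).1,
      (card_image_of_injOn (hφ.mono (hsub t ht))).trans (hT t ht).2⟩
  · intro s hs s' hs' hne
    obtain ⟨t, ht, rfl⟩ := mem_image.1 hs
    obtain ⟨t', ht', rfl⟩ := mem_image.1 hs'
    rw [← image_inter_of_injOn _ _ (hφ.mono (Set.union_subset (hsub t ht) (hsub t' ht')))]
    exact card_image_le.trans (hL ht ht' fun h => hne (h ▸ rfl))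

theorem IsLinear.exists_isPacking_range (hT : IsTripleFamily A T) (hL : IsLinear T) {n : ℕ}
    (hn : n ≤ #T) : ∃ T' : Finset (Finset ℕ), IsPacking (range #A) T' ∧ #T' = n := by
  obtain ⟨φ, hφ, hA⟩ := A.exists_injOn_image_eq_range
  obtain ⟨hT₁, hL₁, hc⟩ := hL.image hT hφ
  obtain ⟨T₂, hsub, rfl⟩ := exists_subset_card_eq (hc ▸ hn)
  exact ⟨T₂, hA ▸ (hL₁.mono hsub).isPacking fun t ht => hT₁ t (hsub ht), rfl⟩

end Transport

section Cone

theorem Finset.map_some_inter_insertNone {α : Type*} [DecidableEq α] (s t : Finset α) :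
    s.map .some ∩ t.insertNone = (s ∩ t).map .some := by
  ext (_ | x) <;> simp

theorem Finset.insertNone_inter {α : Type*} [DecidableEq α] (s t : Finset α) :
    s.insertNone ∩ t.insertNone = (s ∩ t).insertNone := by
  ext (_ | x) <;> simp

variable {α : Type*} [DecidableEq α] {A : Finset α} {T M : Finset (Finset α)}

def coneFamily (T M : Finset (Finset α)) : Finset (Finset (Option α)) :=
  T.map (mapEmbedding .some).toEmbedding ∪ M.map insertNone.toEmbedding

theorem card_coneFamily (T M : Finset (Finset α)) : #(coneFamily T M) = #T + #M := by
  rw [coneFamily, card_union_of_disjoint, card_map, card_map]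
  simp only [disjoint_left, mem_map, RelEmbedding.coe_toEmbedding, mapEmbedding_apply]
  rintro _ ⟨t, -, rfl⟩ ⟨e, -, he⟩
  simpa using congrArg (none ∈ ·) he

theorem IsTripleFamily.coneFamily (hT : IsTripleFamily A T) (hM : M ⊆ A.powersetCard 2) :
    IsTripleFamily A.insertNone (coneFamily T M) := by
  intro t ht
  rcases mem_union.1 ht with ht | ht <;> obtain ⟨s, hs, rfl⟩ := mem_map.1 ht
  · refine ⟨fun o ho => ?_, by simp [(hT s hs).2]⟩
    obtain ⟨x, hx, rfl⟩ := mem_map.1 ho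
    exact some_mem_insertNone.2 ((hT s hs).1 hx)
  · simpa using mem_powersetCard.1 (hM hs)

theorem IsLinear.coneFamily (hL : IsLinear T) (hM : (M : Set (Finset α)).PairwiseDisjoint id)
    (hM2 : ∀ e ∈ M, #e = 2) (hMT : ∀ e ∈ M, ∀ t ∈ T, ¬ e ⊆ t) : IsLinear (coneFamily T M) := by
  have hcone : ∀ e ∈ M, ∀ t ∈ T, #(t ∩ e) ≤ 1 := fun e he t ht => by
    have := card_lt_card (ssubset_of_subset_of_ne inter_subset_right
      fun h => hMT e he t ht (inter_eq_right.1 h))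
    have := hM2 e he
    omega
  intro s hs s' hs' hne
  simp only [_root_.coneFamily, coe_union, coe_map, Set.mem_union, Set.mem_image, mem_coe] at hs hs'
  rcases hs with ⟨t, ht, rfl⟩ | ⟨e, he, rfl⟩ <;> rcases hs' with ⟨t', ht', rfl⟩ | ⟨e', he', rfl⟩
  · simp only [RelEmbedding.coe_toEmbedding, mapEmbedding_apply, ← map_inter, card_map]
    exact hL ht ht' fun h => hne (h ▸ rfl)
  · simp only [RelEmbedding.coe_toEmbedding, mapEmbedding_apply, map_some_inter_insertNone,
      card_map]
    exact hcone e' he' t ht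
  · rw [inter_comm]
    simp only [RelEmbedding.coe_toEmbedding, mapEmbedding_apply, map_some_inter_insertNone,
      card_map]
    exact hcone e he t' ht'
  · have : Disjoint e e' := hM he he' fun h => hne (h ▸ rfl)
    simp [insertNone_inter, disjoint_iff_inter_eq_empty.1 this]

end Cone

section Skolem

variable {X : Type*}

def verticalTriple (x : X) : Finset (X × ZMod 3) := {x} ×ˢ univ

theorem card_verticalTriple (x : X) : #(verticalTriple x) = 3 := by
  simp [verticalTriple]

theorem card_verticalTriple_inter_le [DecidableEq X] {m m' : X} (h : m ≠ m') :
    #(verticalTriple m ∩ verticalTriple m') ≤ 1 := by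
  refine card_le_one.2 fun p hp _ _ => absurd ?_ h
  simp only [verticalTriple, mem_inter, mem_product, mem_singleton] at hp
  exact hp.1.1.symm.trans hp.2.1

variable [AddCommGroup X] [DecidableEq X] {G : X → X}

def boseTriple (G : X → X) (x y : X) (l : ZMod 3) : Finset (X × ZMod 3) :=
  {(x, l), (y, l), (G (x + y), l + 1)}

def leaveEdge (G : X → X) (x : X) (l : ZMod 3) : Finset (X × ZMod 3) :=
  {(x, l), (G (x + x), l + 1)}

def leaveMatching (G : X → X) (O : Finset X) : Finset (Finset (X × ZMod 3)) :=
  (O ×ˢ univ).image fun q => leaveEdge G q.1 q.2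

theorem mem_boseTriple {x y : X} {l : ZMod 3} {p : X × ZMod 3} :
    p ∈ boseTriple G x y l ↔ p = (x, l) ∨ p = (y, l) ∨ p = (G (x + y), l + 1) := by
  simp [boseTriple]

theorem boseTriple_comm (G : X → X) (x y : X) (l : ZMod 3) :
    boseTriple G x y l = boseTriple G y x l := by
  rw [boseTriple, boseTriple, insert_comm, add_comm]

theorem card_boseTriple {x y : X} (hxy : x ≠ y) (l : ZMod 3) : #(boseTriple G x y l) = 3 := by
  have : l + 1 ≠ l := by revert l; decide
  rw [boseTriple, card_insert_of_notMem, card_pair] <;> simp [hxy, this.symm]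

theorem card_boseTriple_inter_le (hG : G.Injective) {x y x' y' : X} {l l' : ZMod 3}
    (hne : boseTriple G x y l ≠ boseTriple G x' y' l') :
    #(boseTriple G x y l ∩ boseTriple G x' y' l') ≤ 1 := by
  refine card_le_one.2 fun ⟨a, m⟩ hp ⟨b, n⟩ hq => ?_
  by_contra hpq
  simp only [mem_inter, mem_boseTriple, Prod.mk.injEq] at hp hq hpq
  -- Each triple has two points on layer `l` and one on `l + 1`.
  have hl : l = l' := by grind
  subst hl
  have : (x = x' ∧ y = y') ∨ (x = y' ∧ y = x') := by grind [hG.eq_iff]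
  rcases this with ⟨rfl, rfl⟩ | ⟨rfl, rfl⟩
  · exact hne rfl
  · exact hne (boseTriple_comm G x y l)

theorem card_verticalTriple_inter_boseTriple_le (hG : G.Injective) {m x y : X}
    (hm : G (m + m) = m) (hxy : x ≠ y) (l : ZMod 3) :
    #(verticalTriple m ∩ boseTriple G x y l) ≤ 1 := by
  refine card_le_one.2 fun ⟨a, i⟩ hp ⟨b, j⟩ hq => ?_
  by_contra hpq
  simp only [verticalTriple, mem_inter, mem_product, mem_singleton, mem_univ, and_true,
    mem_boseTriple, Prod.mk.injEq] at hp hq hpq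
  grind [hG.eq_iff]

theorem leaveEdge_not_subset_boseTriple (hG : G.Injective) (x : X) (l : ZMod 3) {x' y' : X}
    (hxy' : x' ≠ y') (l' : ZMod 3) : ¬ leaveEdge G x l ⊆ boseTriple G x' y' l' := by
  simp only [leaveEdge, insert_subset_iff, singleton_subset_iff, mem_boseTriple, Prod.mk.injEq]
  grind [hG.eq_iff]

theorem leaveEdge_not_subset_verticalTriple {x : X} (hx : G (x + x) ≠ x) (l : ZMod 3) (m : X) :
    ¬ leaveEdge G x l ⊆ verticalTriple m := by
  simp only [leaveEdge, verticalTriple, insert_subset_iff, singleton_subset_iff, mem_product,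
    mem_singleton, mem_univ, and_true]
  grind

theorem exists_boseTriple_or_eq_leaveEdge_of_succ [Finite X] (hG : G.Injective) (a b : X)
    (m : ZMod 3) :
    (∃ x y l, x ≠ y ∧ (a, m) ∈ boseTriple G x y l ∧ (b, m + 1) ∈ boseTriple G x y l) ∨
      ({(a, m), (b, m + 1)} : Finset (X × ZMod 3)) = leaveEdge G a m := by
  obtain ⟨c, rfl⟩ := (Finite.injective_iff_surjective.1 hG) b
  by_cases h : c - a = a
  · have hc : a + a = c := by nth_rw 1 [← h]; exact sub_add_cancel c a
    exact .inr (by rw [leaveEdge, hc])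
  · exact .inl ⟨a, c - a, m, Ne.symm h, by simp [mem_boseTriple]⟩

theorem exists_boseTriple_or_eq_leaveEdge [Finite X] (hG : G.Injective) {u v : X × ZMod 3}
    (huv : u ≠ v) :
    (∃ x y l, x ≠ y ∧ u ∈ boseTriple G x y l ∧ v ∈ boseTriple G x y l) ∨
      ∃ x l, ({u, v} : Finset (X × ZMod 3)) = leaveEdge G x l := by
  obtain ⟨a, m⟩ := u
  obtain ⟨b, n⟩ := v
  have layers : ∀ m n : ZMod 3, n = m ∨ n = m + 1 ∨ m = n + 1 := by decide
  rcases layers m n with rfl | rfl | rfl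
  · exact .inl ⟨a, b, n, fun h => huv (h ▸ rfl), by simp [mem_boseTriple]⟩
  · exact (exists_boseTriple_or_eq_leaveEdge_of_succ hG a b m).imp_right fun h => ⟨a, m, h⟩
  · rw [pair_comm]
    exact (exists_boseTriple_or_eq_leaveEdge_of_succ hG b a n).imp
      (fun ⟨x, y, l, hxy, hb, ha⟩ => ⟨x, y, l, hxy, ha, hb⟩) fun h => ⟨b, n, h⟩

section Matching

variable {O : Finset X}

theorem card_leaveEdge_of_mem (hO : ∀ x ∈ O, ∀ y ∈ O, G (y + y) ≠ x) {x : X} (hx : x ∈ O)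
    (l : ZMod 3) : #(leaveEdge G x l) = 2 :=
  card_pair fun h => hO x hx x hx (congrArg Prod.fst h).symm

theorem card_leaveMatching (hO : ∀ x ∈ O, ∀ y ∈ O, G (y + y) ≠ x) :
    #(leaveMatching G O) = 3 * #O := by
  rw [leaveMatching, card_image_of_injOn, card_product, card_univ, ZMod.card, mul_comm]
  rintro ⟨x, l⟩ hx ⟨x', l'⟩ hx' h
  simp only [coe_product, coe_univ, Set.mem_prod, mem_coe, Set.mem_univ, and_true] at hx hx' h
  have : (x, l) ∈ leaveEdge G x' l' := h ▸ by simp [leaveEdge]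
  simp only [leaveEdge, mem_insert, mem_singleton, Prod.mk.injEq] at this
  grind

theorem pairwiseDisjoint_leaveMatching (hO : ∀ x ∈ O, ∀ y ∈ O, G (y + y) ≠ x)
    (hπ : (fun x => G (x + x)).Injective) :
    (leaveMatching G O : Set (Finset (X × ZMod 3))).PairwiseDisjoint id := by
  intro e he e' he' hne
  simp only [leaveMatching, coe_image, coe_product, coe_univ, Set.mem_image, Set.mem_prod,
    mem_coe, Set.mem_univ, and_true, Prod.exists] at he he'
  obtain ⟨x, l, hx, rfl⟩ := he
  obtain ⟨x', l', hx', rfl⟩ := he'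
  refine disjoint_left.2 fun p hp hp' => hne ?_
  have := hO x hx x' hx'
  have := hO x' hx' x hx
  have := @hπ x x'
  simp only [id, leaveEdge, mem_insert, mem_singleton] at hp hp'
  grind

end Matching

variable [Fintype X]

def skolemFamily (G : X → X) : Finset (Finset (X × ZMod 3)) :=
  ({x | G (x + x) = x} : Finset X).image verticalTriple ∪
    (univ.offDiag ×ˢ univ).image fun q => boseTriple G q.1.1 q.1.2 q.2

theorem mem_skolemFamily {t : Finset (X × ZMod 3)} :
    t ∈ skolemFamily G ↔ (∃ x, G (x + x) = x ∧ verticalTriple x = t) ∨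
      ∃ x y l, x ≠ y ∧ boseTriple G x y l = t := by
  simp [skolemFamily]

theorem isTripleFamily_skolemFamily : IsTripleFamily univ (skolemFamily G) := by
  intro t ht
  rcases mem_skolemFamily.1 ht with ⟨x, -, rfl⟩ | ⟨x, y, l, hxy, rfl⟩
  · exact ⟨subset_univ _, card_verticalTriple x⟩
  · exact ⟨subset_univ _, card_boseTriple hxy l⟩

theorem isLinear_skolemFamily (hG : G.Injective) : IsLinear (skolemFamily G) := by
  intro t ht t' ht' hne
  rcases mem_skolemFamily.1 ht with ⟨x, hx, rfl⟩ | ⟨x, y, l, hxy, rfl⟩ <;>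
    rcases mem_skolemFamily.1 ht' with ⟨x', hx', rfl⟩ | ⟨x', y', l', hxy', rfl⟩
  · exact card_verticalTriple_inter_le fun h => hne (h ▸ rfl)
  · exact card_verticalTriple_inter_boseTriple_le hG hx hxy' l'
  · exact inter_comm (verticalTriple x') _ ▸ card_verticalTriple_inter_boseTriple_le hG hx' hxy l
  · exact card_boseTriple_inter_le hG hne

theorem leaveEdge_not_subset_of_mem_skolemFamily (hG : G.Injective) {x : X}
    (hx : G (x + x) ≠ x) (l : ZMod 3) {t : Finset (X × ZMod 3)} (ht : t ∈ skolemFamily G) :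
    ¬ leaveEdge G x l ⊆ t := by
  rcases mem_skolemFamily.1 ht with ⟨m, -, rfl⟩ | ⟨x', y', l', hxy', rfl⟩
  · exact leaveEdge_not_subset_verticalTriple hx l m
  · exact leaveEdge_not_subset_boseTriple hG x l hxy' l'

theorem choose_two_le_card_skolemFamily (hG : G.Injective) :
    (Fintype.card X * 3).choose 2 ≤ 3 * #(skolemFamily G) + 3 * #{x | G (x + x) ≠ x} := by
  have hcov : ∀ p ∈ (univ : Finset (X × ZMod 3)).powersetCard 2,
      (∃ t ∈ skolemFamily G, p ⊆ t) ∨ p ∈ leaveMatching G {x | G (x + x) ≠ x} := by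
    intro p hp
    obtain ⟨u, v, huv, rfl⟩ := card_eq_two.1 (mem_powersetCard.1 hp).2
    rcases exists_boseTriple_or_eq_leaveEdge hG huv with ⟨x, y, l, hxy, hu, hv⟩ | ⟨x, l, he⟩
    · exact .inl ⟨_, mem_skolemFamily.2 (.inr ⟨x, y, l, hxy, rfl⟩),
        by simp [insert_subset_iff, hu, hv]⟩
    · by_cases hx : G (x + x) = x
      · refine .inl ⟨_, mem_skolemFamily.2 (.inl ⟨x, hx, rfl⟩), ?_⟩
        simp [he, leaveEdge, hx, verticalTriple, insert_subset_iff]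
      · exact .inr (mem_image.2 ⟨(x, l), by simp [hx], he.symm⟩)
  have hS : #(leaveMatching G {x | G (x + x) ≠ x}) ≤ 3 * #{x | G (x + x) ≠ x} := by
    refine card_image_le.trans ?_
    rw [card_product, card_univ, ZMod.card, mul_comm]
  have := choose_two_le_three_mul_card_add (fun t ht => (isTripleFamily_skolemFamily t ht).2) hcov
  rw [card_univ, Fintype.card_prod, ZMod.card] at this
  omega

end Skolem

theorem Nat.choose_two_eq_of_mul_pred_eq {n m : ℕ} (h : n * (n - 1) = 2 * m) : n.choose 2 = m := by
  rw [Nat.choose_two_right, h, Nat.mul_div_cancel_left _ two_pos]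

theorem ZMod.natCast_eq_natCast_iff_of_lt {n a b : ℕ} (ha : a < n) (hb : b < n) :
    (a : ZMod n) = b ↔ a = b := by
  rw [ZMod.natCast_eq_natCast_iff', Nat.mod_eq_of_lt ha, Nat.mod_eq_of_lt hb]

section EvenOrder

variable (k : ℕ) [NeZero k]

-- Inverse of doubling on `{x | x.val < k}`, extended to a bijection by sending `2j + 1` to `k + j`.
def skolemHalve (s : ZMod (2 * k)) : ZMod (2 * k) :=
  ((if s.val % 2 = 0 then s.val / 2 else k + s.val / 2 : ℕ) : ZMod (2 * k))

theorem val_skolemHalve (s : ZMod (2 * k)) :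
    (skolemHalve k s).val = if s.val % 2 = 0 then s.val / 2 else k + s.val / 2 := by
  have := s.val_lt
  exact ZMod.val_cast_of_lt (by split_ifs <;> omega)

theorem skolemHalve_injective : (skolemHalve k).Injective := fun a b h => by
  have := congrArg ZMod.val h
  have := a.val_lt
  have := b.val_lt
  rw [val_skolemHalve, val_skolemHalve] at *
  exact ZMod.val_injective _ (by split_ifs at * <;> omega)

theorem skolemHalve_add_self {x : ZMod (2 * k)} (hx : x.val < k) : skolemHalve k (x + x) = x := by
  have hval : (x + x).val = 2 * x.val := by rw [ZMod.val_add_of_lt (by omega)]; ring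
  rw [skolemHalve, hval, if_pos (by omega), Nat.mul_div_cancel_left _ two_pos,
    ZMod.natCast_zmod_val]

theorem card_filter_skolemHalve_add_self_ne_le :
    #{x : ZMod (2 * k) | skolemHalve k (x + x) ≠ x} ≤ k :=
  calc #{x : ZMod (2 * k) | skolemHalve k (x + x) ≠ x}
      ≤ #((range k).image fun j => ((k + j : ℕ) : ZMod (2 * k))) := by
        refine card_le_card fun x hx => ?_
        have hk : k ≤ x.val := not_lt.1 fun h => (mem_filter.1 hx).2 (skolemHalve_add_self k h)
        refine mem_image.2 ⟨x.val - k, mem_range.2 (by have := x.val_lt; omega), ?_⟩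
        rw [Nat.add_sub_cancel' hk, ZMod.natCast_zmod_val]
    _ ≤ k := card_image_le.trans (card_range k).le

end EvenOrder

section OddOrder

variable (k : ℕ)

-- Multiplication by `k + 1 = 2⁻¹`.
def halve (s : ZMod (2 * k + 1)) : ZMod (2 * k + 1) := ((k + 1 : ℕ) : ZMod (2 * k + 1)) * s

theorem halve_add_self (x : ZMod (2 * k + 1)) : halve k (x + x) = x := by
  have h : ((2 * k + 1 : ℕ) : ZMod (2 * k + 1)) = 0 := ZMod.natCast_self _
  rw [halve]
  push_cast at h ⊢
  linear_combination x * h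

theorem halve_injective : (halve k).Injective := fun a b h => by
  have hadd : ∀ x y, halve k (x + y) = halve k x + halve k y := fun x y => mul_add _ _ _
  calc a = halve k a + halve k a := by rw [← hadd, halve_add_self]
    _ = b := by rw [h, ← hadd, halve_add_self]

-- Fixes `0` and cycles `1 → 2 → ⋯ → 2k → 1`.
def rotateNonzero (x : ZMod (2 * k + 1)) : ZMod (2 * k + 1) := Equiv.swap 0 (-1) x + 1

theorem rotateNonzero_injective : (rotateNonzero k).Injective :=
  (add_left_injective 1).comp (Equiv.injective _)

theorem rotateNonzero_zero : rotateNonzero k 0 = 0 := by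
  simp [rotateNonzero]

theorem rotateNonzero_natCast_odd {j : ℕ} (hj : j < k) :
    rotateNonzero k ((2 * j + 1 : ℕ) : ZMod (2 * k + 1)) =
      ((2 * j + 2 : ℕ) : ZMod (2 * k + 1)) := by
  have hneg : (-1 : ZMod (2 * k + 1)) = ((2 * k : ℕ) : ZMod (2 * k + 1)) := by
    have := ZMod.natCast_self (2 * k + 1)
    push_cast at this ⊢
    linear_combination -this
  rw [rotateNonzero, Equiv.swap_apply_of_ne_of_ne]
  · push_cast; ring
  · rw [← Nat.cast_zero, Ne, ZMod.natCast_eq_natCast_iff_of_lt (by omega) (by omega)]; omega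
  · rw [hneg, Ne, ZMod.natCast_eq_natCast_iff_of_lt (by omega) (by omega)]; omega

def twistedHalve (s : ZMod (2 * k + 1)) : ZMod (2 * k + 1) := rotateNonzero k (halve k s)

theorem twistedHalve_add_self (x : ZMod (2 * k + 1)) :
    twistedHalve k (x + x) = rotateNonzero k x := by
  rw [twistedHalve, halve_add_self]

theorem twistedHalve_injective : (twistedHalve k).Injective :=
  (rotateNonzero_injective k).comp (halve_injective k)

theorem card_filter_twistedHalve_add_self_ne_le :
    #{x : ZMod (2 * k + 1) | twistedHalve k (x + x) ≠ x} ≤ 2 * k :=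
  calc #{x : ZMod (2 * k + 1) | twistedHalve k (x + x) ≠ x}
      ≤ #(univ.erase (0 : ZMod (2 * k + 1))) := card_le_card fun x hx => mem_erase.2
        ⟨fun h => (mem_filter.1 hx).2 (by rw [h, twistedHalve_add_self, rotateNonzero_zero]),
          mem_univ x⟩
    _ = 2 * k := by rw [card_erase_of_mem (mem_univ _), card_univ, ZMod.card]; rfl

def oddResidues : Finset (ZMod (2 * k + 1)) :=
  (range k).image fun j => ((2 * j + 1 : ℕ) : ZMod (2 * k + 1))

theorem card_oddResidues : #(oddResidues k) = k := by
  rw [oddResidues, card_image_of_injOn, card_range]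
  intro j hj j' hj' h
  simp only [coe_range, Set.mem_Iio] at hj hj'
  have := (ZMod.natCast_eq_natCast_iff_of_lt (by omega) (by omega)).1 h
  omega

theorem twistedHalve_add_self_ne_of_mem_oddResidues {x y : ZMod (2 * k + 1)}
    (hx : x ∈ oddResidues k) (hy : y ∈ oddResidues k) : twistedHalve k (y + y) ≠ x := by
  obtain ⟨j, hj, rfl⟩ := mem_image.1 hx
  obtain ⟨j', hj', rfl⟩ := mem_image.1 hy
  rw [mem_range] at hj hj'
  rw [twistedHalve_add_self, rotateNonzero_natCast_odd k hj', Ne,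
    ZMod.natCast_eq_natCast_iff_of_lt (by omega) (by omega)]
  omega

end OddOrder

theorem exists_isPacking_six_mul (k : ℕ) :
    ∃ T : Finset (Finset ℕ), IsPacking (range (6 * k)) T ∧ #T = 6 * k * ((6 * k - 1) / 2) / 3 := by
  rcases Nat.eq_zero_or_pos k with rfl | hk
  · exact ⟨∅, ⟨by simp [IsTripleFamily], by simp⟩, rfl⟩
  have : NeZero k := ⟨hk.ne'⟩
  have hA : #(univ : Finset (ZMod (2 * k) × ZMod 3)) = 6 * k := by
    rw [card_univ, Fintype.card_prod, ZMod.card, ZMod.card]; ring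
  rw [← hA]
  refine (isLinear_skolemFamily (skolemHalve_injective k)).exists_isPacking_range
    isTripleFamily_skolemFamily ?_
  have hcov := choose_two_le_card_skolemFamily (skolemHalve_injective k)
  have hleave := card_filter_skolemHalve_add_self_ne_le k
  rw [ZMod.card, Nat.choose_two_eq_of_mul_pred_eq (m := 3 * k * (6 * k - 1))
    (by rw [show 2 * k * 3 = 6 * k by ring]; ring)] at hcov
  generalize #(skolemFamily (skolemHalve k)) = N at hcov ⊢
  generalize #{x : ZMod (2 * k) | skolemHalve k (x + x) ≠ x} = B at hcov hleave
  obtain ⟨j, rfl⟩ : ∃ j, k = j + 1 := ⟨k - 1, by omega⟩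
  rw [hA, show (6 * (j + 1) - 1) / 2 = 3 * j + 2 by omega]
  rw [show 6 * (j + 1) - 1 = 6 * j + 5 by omega] at hcov
  ring_nf at hcov ⊢
  omega

theorem exists_isPacking_six_mul_add_two (k : ℕ) :
    ∃ T : Finset (Finset ℕ), IsPacking (range (6 * k + 2)) T ∧
      #T = (6 * k + 2) * ((6 * k + 2 - 1) / 2) / 3 := by
  let v : ZMod (2 * k + 1) × ZMod 3 := (0, 0)
  have hL := isLinear_skolemFamily (halve_injective k)
  have hT := isTripleFamily_skolemFamily (G := halve k)
  have hA : #((univ : Finset (ZMod (2 * k + 1) × ZMod 3)).erase v) = 6 * k + 2 := by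
    rw [card_erase_of_mem (mem_univ v), card_univ, Fintype.card_prod, ZMod.card, ZMod.card]
    omega
  rw [← hA]
  refine (hL.mono (filter_subset _ _)).exists_isPacking_range (hT.filter_notMem v) ?_
  have hsts := choose_two_le_card_skolemFamily (halve_injective k)
  have hdel := (hL.isPacking hT).card_sub_le_card_filter_notMem (mem_univ v)
  simp only [halve_add_self, ne_eq, not_true_eq_false, filter_false, card_empty, mul_zero,
    add_zero, card_univ, Fintype.card_prod, ZMod.card] at hsts hdel
  rw [Nat.choose_two_eq_of_mul_pred_eq (m := 3 * (2 * k + 1) * (3 * k + 1))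
    (by rw [show (2 * k + 1) * 3 - 1 = 2 * (3 * k + 1) by omega]; ring)] at hsts
  rw [hA, show (6 * k + 2 - 1) / 2 = 3 * k by omega]
  rw [show ((2 * k + 1) * 3 - 1) / 2 = 3 * k + 1 by omega] at hdel
  ring_nf at hsts hdel ⊢
  omega

theorem exists_isPacking_six_mul_add_four (k : ℕ) :
    ∃ T : Finset (Finset ℕ), IsPacking (range (6 * k + 4)) T ∧
      #T = (6 * k + 4) * ((6 * k + 4 - 1) / 2) / 3 := by
  let G := twistedHalve k
  let M := leaveMatching G (oddResidues k)
  have hO : ∀ x ∈ oddResidues k, ∀ y ∈ oddResidues k, G (y + y) ≠ x :=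
    fun x hx y hy => twistedHalve_add_self_ne_of_mem_oddResidues k hx hy
  have hM2 : ∀ e ∈ M, #e = 2 := by
    simp only [M, leaveMatching, forall_mem_image, mem_product]
    exact fun q hq => card_leaveEdge_of_mem hO hq.1 q.2
  have hT := (isTripleFamily_skolemFamily (G := G)).coneFamily (M := M)
    fun e he => mem_powersetCard.2 ⟨subset_univ e, hM2 e he⟩
  have hL := (isLinear_skolemFamily (twistedHalve_injective k)).coneFamily
    (pairwiseDisjoint_leaveMatching hO
      (by simpa only [G, twistedHalve_add_self] using rotateNonzero_injective k)) hM2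
    (by
      simp only [leaveMatching, forall_mem_image, mem_product]
      exact fun q hq t ht => leaveEdge_not_subset_of_mem_skolemFamily (twistedHalve_injective k)
        (hO q.1 hq.1 q.1 hq.1) q.2 ht)
  have hA : #(univ : Finset (ZMod (2 * k + 1) × ZMod 3)).insertNone = 6 * k + 4 := by
    rw [card_insertNone, card_univ, Fintype.card_prod, ZMod.card, ZMod.card]; ring
  rw [← hA]
  refine hL.exists_isPacking_range hT ?_
  have hcov := choose_two_le_card_skolemFamily (twistedHalve_injective k)
  have hleave := card_filter_twistedHalve_add_self_ne_le k
  rw [ZMod.card, Nat.choose_two_eq_of_mul_pred_eq (m := 3 * (2 * k + 1) * (3 * k + 1))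
    (by rw [show (2 * k + 1) * 3 - 1 = 2 * (3 * k + 1) by omega]; ring)] at hcov
  rw [card_coneFamily, card_leaveMatching hO, card_oddResidues]
  generalize #(skolemFamily G) = N at hcov ⊢
  generalize #{x : ZMod (2 * k + 1) | G (x + x) ≠ x} = B at hcov hleave
  rw [hA, show (6 * k + 4 - 1) / 2 = 3 * k + 1 by omega]
  ring_nf at hcov ⊢
  omega

theorem packing_max_even_general (a : ℕ) (hEven : Even a) :
    IsGreatest {n | ∃ T : Finset (Finset ℕ), IsPacking (Finset.range a) T ∧ T.card = n}
      (a * ((a - 1) / 2) / 3) := by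
  refine ⟨?_, ?_⟩
  · obtain ⟨k, rfl | rfl | rfl⟩ : ∃ k, a = 6 * k ∨ a = 6 * k + 2 ∨ a = 6 * k + 4 := by
      obtain ⟨r, rfl⟩ := hEven
      exact ⟨r / 3, by omega⟩
    exacts [exists_isPacking_six_mul k, exists_isPacking_six_mul_add_two k,
      exists_isPacking_six_mul_add_four k]
  · rintro n ⟨T, hT, rfl⟩
    have := hT.three_mul_card_le
    rw [card_range] at this
    exact (Nat.le_div_iff_mul_le three_pos).2 (by linarith)

theorem packing_max_even (a : ℕ) (ha : 0 < a) (hEven : Even a) :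
    IsGreatest {n | ∃ T : Finset (Finset ℕ), IsPacking (Finset.range a) T ∧ T.card = n}
      (a * ((a - 1) / 2) / 3) :=
  packing_max_even_general a hEven
end

section
/- Let A and B be disjoint finite sets with |A| = a and |B| = b. Every family Q of 4-element subsets of A ∪ B with the property that each 3-element subset T of A ∪ B with |T ∩ A| ≥ 2 is contained in some member of Q satisfies |Q| ≥ b · C_*(a), where C_*(a) is the minimum weight of a triple system on an a-element set. -/
open Finset

lemma transfer {α : Type*} [DecidableEq α] (a : ℕ) (A : Finset α) (hA : A.card = a)
    (T : Finset (Finset α)) (hT : IsTripleFamily A T) :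
    Cstar2 a ≤ 2 * T.card + (uncoveredPairs A T).card := by
  classical
  have hc : A.card = (Finset.range a).card := by rw [hA, Finset.card_range]
  let e := Finset.equivOfCardEq hc
  set f : α → ℕ := fun x => if h : x ∈ A then ((e ⟨x, h⟩ : Finset.range a) : ℕ) else 0 with hf
  have hfval : ∀ (x : α) (h : x ∈ A), f x = ((e ⟨x, h⟩ : Finset.range a) : ℕ) := by
    intro x h; simp [hf, h]
  have hinj : Set.InjOn f A := by
    intro x hx y hy hxy
    rw [hfval x hx, hfval y hy] at hxy
    have := e.injective (Subtype.ext hxy)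
    exact Subtype.ext_iff.mp this
  have hmem : ∀ x ∈ A, f x ∈ Finset.range a := by
    intro x hx; rw [hfval x hx]; exact (e ⟨x, hx⟩).2
  have himg : A.image f = Finset.range a := by
    apply Finset.eq_of_subset_of_card_le
    · intro n hn; obtain ⟨x, hx, rfl⟩ := Finset.mem_image.mp hn; exact hmem x hx
    · rw [Finset.card_range, Finset.card_image_of_injOn hinj, hA]
  set T' : Finset (Finset ℕ) := T.image (fun t => t.image f) with hT'def
  have hT' : IsTripleFamily (Finset.range a) T' := by
    intro t' ht'
    obtain ⟨t, ht, rfl⟩ := Finset.mem_image.mp ht'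
    constructor
    · intro n hn
      obtain ⟨x, hx, rfl⟩ := Finset.mem_image.mp hn
      exact hmem x ((hT t ht).1 hx)
    · rw [Finset.card_image_of_injOn (hinj.mono (hT t ht).1)]
      exact (hT t ht).2
  have hC : Cstar2 a ≤ 2 * T'.card + (uncoveredPairs (Finset.range a) T').card :=
    Nat.sInf_le ⟨T', hT', rfl⟩
  have hcard : T'.card ≤ T.card := Finset.card_image_le
  have hunc : (uncoveredPairs (Finset.range a) T').card ≤ (uncoveredPairs A T).card := by
    apply Finset.card_le_card_of_surjOn (fun p => p.image f)
    intro p' hp'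
    simp only [Finset.coe_filter, uncoveredPairs, Set.mem_setOf_eq, Finset.mem_filter,
      Finset.mem_powersetCard] at hp' ⊢
    obtain ⟨⟨hp'sub, hp'card⟩, hp'unc⟩ := hp'
    set p := A.filter (fun x => f x ∈ p') with hp
    have hpsub : p ⊆ A := Finset.filter_subset _ _
    have hpimg : p.image f = p' := by
      ext n
      constructor
      · intro hn
        obtain ⟨x, hx, rfl⟩ := Finset.mem_image.mp hn
        exact (Finset.mem_filter.mp hx).2
      · intro hn
        have : n ∈ A.image f := himg ▸ hp'sub hn
        obtain ⟨x, hx, rfl⟩ := Finset.mem_image.mp this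
        exact Finset.mem_image.mpr ⟨x, Finset.mem_filter.mpr ⟨hx, hn⟩, rfl⟩
    have hpcard : p.card = 2 := by
      rw [← hp'card, ← hpimg, Finset.card_image_of_injOn (hinj.mono hpsub)]
    refine ⟨p, ⟨⟨⟨hpsub, hpcard⟩, ?_⟩, hpimg⟩⟩
    intro t ht hpt
    exact hp'unc (t.image f) (Finset.mem_image.mpr ⟨t, ht, rfl⟩)
      (hpimg ▸ Finset.image_subset_image hpt)
  omega


theorem ABsystem_lower {α : Type*} [DecidableEq α] (a b : ℕ) (A B : Finset α)
    (hd : Disjoint A B) (hA : A.card = a) (hB : B.card = b)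
    (Q : Finset (Finset α)) (hQ : IsABSystem A B Q) :
    (b : ℚ) * Cstar a ≤ Q.card := by
  classical
  obtain ⟨hQ4, hQcov⟩ := hQ
  -- per-y bound
  have key : ∀ y ∈ B, Cstar2 a ≤
      2 * (Q.filter fun q => y ∈ q ∧ (q ∩ A).card = 3).card
      + (Q.filter fun q => y ∈ q ∧ (q ∩ A).card = 2).card := by
    intro y hy
    have hyA : y ∉ A := fun h => (Finset.disjoint_left.mp hd h) hy
    set Ty := (Q.filter fun q => y ∈ q ∧ (q ∩ A).card = 3).image (· ∩ A) with hTydef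
    have hTfam : IsTripleFamily A Ty := by
      intro t ht
      obtain ⟨q, hq, rfl⟩ := Finset.mem_image.mp ht
      exact ⟨Finset.inter_subset_right, (Finset.mem_filter.mp hq).2.2⟩
    have h1 := transfer a A hA Ty hTfam
    have h2 : Ty.card ≤ (Q.filter fun q => y ∈ q ∧ (q ∩ A).card = 3).card :=
      Finset.card_image_le
    have h3 : (uncoveredPairs A Ty).card ≤
        (Q.filter fun q => y ∈ q ∧ (q ∩ A).card = 2).card := by
      have hsub : uncoveredPairs A Ty ⊆
          (Q.filter fun q => y ∈ q ∧ (q ∩ A).card = 2).image (· ∩ A) := by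
        intro p hp
        obtain ⟨hpm, hpunc⟩ := Finset.mem_filter.mp hp
        obtain ⟨hpA, hp2⟩ := Finset.mem_powersetCard.mp hpm
        have hyp : y ∉ p := fun h => hyA (hpA h)
        have hT3 : insert y p ⊆ A ∪ B :=
          Finset.insert_subset (Finset.mem_union_right _ hy)
            (hpA.trans Finset.subset_union_left)
        have hc3 : (insert y p).card = 3 := by
          rw [Finset.card_insert_of_notMem hyp, hp2]
        have hiA : insert y p ∩ A = p := by
          ext x
          simp only [Finset.mem_inter, Finset.mem_insert]
          constructor
          · rintro ⟨(rfl | hx), hxA⟩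
            · exact absurd hxA hyA
            · exact hx
          · intro hx; exact ⟨Or.inr hx, hpA hx⟩
        obtain ⟨q, hqQ, hq⟩ := hQcov _ hT3 hc3 (by rw [hiA, hp2])
        have hyq : y ∈ q := hq (Finset.mem_insert_self _ _)
        have hpq : p ⊆ q ∩ A :=
          Finset.subset_inter ((Finset.subset_insert _ _).trans hq) hpA
        have hle : (q ∩ A).card ≤ 3 := by
          have hsub : q ∩ A ⊆ q.erase y := by
            intro x hx
            obtain ⟨hxq, hxA⟩ := Finset.mem_inter.mp hx
            exact Finset.mem_erase.mpr ⟨fun h => hyA (h ▸ hxA), hxq⟩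
          calc (q ∩ A).card ≤ (q.erase y).card := Finset.card_le_card hsub
            _ = q.card - 1 := Finset.card_erase_of_mem hyq
            _ ≤ 3 := by rw [(hQ4 q hqQ).2]
        have hge : 2 ≤ (q ∩ A).card := hp2 ▸ Finset.card_le_card hpq
        have hne3 : (q ∩ A).card ≠ 3 := by
          intro h3'
          exact hpunc (q ∩ A)
            (Finset.mem_image.mpr ⟨q, Finset.mem_filter.mpr ⟨hqQ, hyq, h3'⟩, rfl⟩) hpq
        have h2' : (q ∩ A).card = 2 := by omega
        have hpe : q ∩ A = p :=
          (Finset.eq_of_subset_of_card_le hpq (by rw [h2', hp2])).symm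
        exact Finset.mem_image.mpr ⟨q, Finset.mem_filter.mpr ⟨hqQ, hyq, h2'⟩, hpe⟩
      exact le_trans (Finset.card_le_card hsub) Finset.card_image_le
    omega
  -- double counting
  have hsplit : ∀ q ∈ Q, (q ∩ A).card + (q ∩ B).card = 4 := by
    intro q hq
    have hdis : Disjoint (q ∩ A) (q ∩ B) :=
      hd.mono Finset.inter_subset_right Finset.inter_subset_right
    rw [← Finset.card_union_of_disjoint hdis, ← Finset.inter_union_distrib_left,
      Finset.inter_eq_left.mpr (hQ4 q hq).1, (hQ4 q hq).2]
  have hcount : ∀ (k : ℕ), ∑ y ∈ B, (Q.filter fun q => y ∈ q ∧ (q ∩ A).card = k).card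
      = ∑ q ∈ Q.filter (fun q => (q ∩ A).card = k), (q ∩ B).card := by
    intro k
    simp_rw [Finset.card_filter]
    rw [Finset.sum_comm, Finset.sum_filter]
    refine Finset.sum_congr rfl fun q hq => ?_
    by_cases hP : (q ∩ A).card = k
    · simp only [hP, and_true, if_true]
      rw [← Finset.card_filter]
      congr 1
      ext x
      simp [Finset.mem_inter, Finset.mem_filter, and_comm]
    · simp [hP]
  have h3sum : ∑ q ∈ Q.filter (fun q => (q ∩ A).card = 3), (q ∩ B).card
      = (Q.filter (fun q => (q ∩ A).card = 3)).card := by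
    rw [Finset.card_eq_sum_ones]
    refine Finset.sum_congr rfl fun q hq => ?_
    obtain ⟨hqQ, h3⟩ := Finset.mem_filter.mp hq
    have := hsplit q hqQ
    omega
  have h2sum : ∑ q ∈ Q.filter (fun q => (q ∩ A).card = 2), (q ∩ B).card
      = 2 * (Q.filter (fun q => (q ∩ A).card = 2)).card := by
    rw [Finset.card_eq_sum_ones, Finset.mul_sum]
    refine Finset.sum_congr rfl fun q hq => ?_
    obtain ⟨hqQ, h2⟩ := Finset.mem_filter.mp hq
    have := hsplit q hqQ
    omega
  have hdisj : (Q.filter (fun q => (q ∩ A).card = 3)).card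
      + (Q.filter (fun q => (q ∩ A).card = 2)).card ≤ Q.card := by
    rw [← Finset.card_union_of_disjoint]
    · exact Finset.card_le_card
        (Finset.union_subset (Finset.filter_subset _ _) (Finset.filter_subset _ _))
    · rw [Finset.disjoint_left]
      intro q hq hq'
      have h3 := (Finset.mem_filter.mp hq).2
      have h2 := (Finset.mem_filter.mp hq').2
      omega
  have hnat : b * Cstar2 a ≤ 2 * Q.card := by
    calc b * Cstar2 a = ∑ _y ∈ B, Cstar2 a := by rw [Finset.sum_const, hB, smul_eq_mul]
      _ ≤ ∑ y ∈ B, (2 * (Q.filter fun q => y ∈ q ∧ (q ∩ A).card = 3).card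
            + (Q.filter fun q => y ∈ q ∧ (q ∩ A).card = 2).card) :=
          Finset.sum_le_sum key
      _ = 2 * (∑ y ∈ B, (Q.filter fun q => y ∈ q ∧ (q ∩ A).card = 3).card)
            + ∑ y ∈ B, (Q.filter fun q => y ∈ q ∧ (q ∩ A).card = 2).card := by
          rw [Finset.sum_add_distrib, Finset.mul_sum]
      _ = 2 * (Q.filter (fun q => (q ∩ A).card = 3)).card
            + 2 * (Q.filter (fun q => (q ∩ A).card = 2)).card := by
          rw [hcount 3, hcount 2, h3sum, h2sum]
      _ ≤ 2 * Q.card := by omega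
  have hq := (Nat.cast_le (α := ℚ)).mpr hnat
  push_cast at hq
  rw [Cstar]
  linarith
end

section
/- Let A be a set of size a with a ≡ 0 or 2 (mod 6), and let T be a family of 3-element subsets of A. Let d be the number of elements x ∈ A for which there exist t', t'' ∈ T with |t' ∩ t''| = 2 and x ∈ t' ∩ t''. Then w(T) ≥ C_*(a) + (1/2)·ceil(d/6), where w(T) is the weight of T and C_*(a) = (1/2)·ceil((2a²−a)/6). -/
open Finset

section WLD
variable {α : Type*} [DecidableEq α]


lemma wld_sum_card (A : Finset α) (S : Finset (Finset α)) (k : ℕ)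
    (h : ∀ s ∈ S, s ⊆ A ∧ s.card = k) :
    ∑ x ∈ A, (S.filter (fun s => x ∈ s)).card = k * S.card := by
  calc ∑ x ∈ A, (S.filter (fun s => x ∈ s)).card
      = ∑ x ∈ A, ∑ s ∈ S, if x ∈ s then 1 else 0 := by
        refine Finset.sum_congr rfl fun x _ => ?_
        rw [Finset.card_filter]
    _ = ∑ s ∈ S, ∑ x ∈ A, if x ∈ s then 1 else 0 := Finset.sum_comm
    _ = ∑ s ∈ S, k := by
        refine Finset.sum_congr rfl fun s hs => ?_
        rw [← Finset.card_filter, Finset.filter_mem_eq_inter,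
          Finset.inter_eq_right.mpr (h s hs).1, (h s hs).2]
    _ = k * S.card := by rw [Finset.sum_const, smul_eq_mul, mul_comm]

lemma wld_pairsAt (s : Finset α) (x : α) (hx : x ∈ s) :
    (s.powersetCard 2).filter (fun p => x ∈ p)
      = (s.erase x).image (fun y => ({x, y} : Finset α)) := by
  ext p
  simp only [mem_filter, mem_powersetCard, mem_image, mem_erase]
  constructor
  · rintro ⟨⟨hps, hp2⟩, hxp⟩
    obtain ⟨u, v, huv, rfl⟩ := Finset.card_eq_two.mp hp2
    rcases Finset.mem_insert.mp hxp with rfl | hv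
    · exact ⟨v, ⟨fun h => huv h.symm, hps (by simp)⟩, rfl⟩
    · simp only [Finset.mem_singleton] at hv
      subst hv
      exact ⟨u, ⟨huv, hps (by simp)⟩, by rw [Finset.pair_comm]⟩
  · rintro ⟨y, ⟨hyx, hys⟩, rfl⟩
    refine ⟨⟨?_, Finset.card_pair (fun h => hyx h.symm)⟩, by simp⟩
    intro z hz
    rcases Finset.mem_insert.mp hz with rfl | hz
    · exact hx
    · simp only [Finset.mem_singleton] at hz; subst hz; exact hys

lemma wld_pairsAt_card (s : Finset α) (x : α) (hx : x ∈ s) :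
    ((s.powersetCard 2).filter (fun p => x ∈ p)).card = s.card - 1 := by
  rw [wld_pairsAt s x hx, Finset.card_image_of_injOn, Finset.card_erase_of_mem hx]
  intro y₁ h₁ y₂ h₂ h
  have h' : ({x, y₁} : Finset α) = {x, y₂} := h
  have hy : y₁ ∈ ({x, y₂} : Finset α) := by rw [← h']; simp
  rcases Finset.mem_insert.mp hy with rfl | hy
  · exact absurd rfl (Finset.mem_erase.mp h₁).1
  · simpa using hy

lemma wld_base (A : Finset α) (T : Finset (Finset α)) (x : α) (hx : x ∈ A) :
    A.card - 1 ≤ ((uncoveredPairs A T).filter (fun p => x ∈ p)).card +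
      ((T.filter (fun t => x ∈ t)).biUnion
        (fun t => (t.powersetCard 2).filter (fun p => x ∈ p))).card := by
  have hP : ((A.powersetCard 2).filter (fun p => x ∈ p)).card = A.card - 1 :=
    wld_pairsAt_card A x hx
  set P := (A.powersetCard 2).filter (fun p => x ∈ p) with hPdef
  have hsplit := Finset.card_filter_add_card_filter_not
    (s := P) (p := fun p => ∃ t ∈ T, p ⊆ t)
  have h1 : (P.filter (fun p => ¬ ∃ t ∈ T, p ⊆ t)) ⊆
      (uncoveredPairs A T).filter (fun p => x ∈ p) := by
    intro p hp
    obtain ⟨hpP, hnc⟩ := mem_filter.mp hp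
    obtain ⟨hpow, hxp⟩ := mem_filter.mp hpP
    push_neg at hnc
    exact mem_filter.mpr ⟨mem_filter.mpr ⟨hpow, hnc⟩, hxp⟩
  have h2 : (P.filter (fun p => ∃ t ∈ T, p ⊆ t)) ⊆ (T.filter (fun t => x ∈ t)).biUnion
      (fun t => (t.powersetCard 2).filter (fun p => x ∈ p)) := by
    intro p hp
    obtain ⟨hpP, t, ht, hpt⟩ := mem_filter.mp hp
    obtain ⟨hpow, hxp⟩ := mem_filter.mp hpP
    refine mem_biUnion.mpr ⟨t, mem_filter.mpr ⟨ht, hpt hxp⟩, mem_filter.mpr ⟨?_, hxp⟩⟩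
    exact mem_powersetCard.mpr ⟨hpt, (mem_powersetCard.mp hpow).2⟩
  have c1 := Finset.card_le_card h1
  have c2 := Finset.card_le_card h2
  omega

lemma wld_biUnion_le_gen (S : Finset (Finset α)) (x : α)
    (h : ∀ t ∈ S, x ∈ t ∧ t.card = 3) :
    (S.biUnion (fun t => (t.powersetCard 2).filter (fun p => x ∈ p))).card ≤ 2 * S.card := by
  refine le_trans Finset.card_biUnion_le ?_
  rw [mul_comm, ← smul_eq_mul]
  refine Finset.sum_le_card_nsmul _ _ 2 ?_
  intro t ht
  rw [wld_pairsAt_card t x (h t ht).1, (h t ht).2]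

lemma wld_biUnion_le' (T : Finset (Finset α)) (hT3 : ∀ t ∈ T, t.card = 3) (x : α)
    (t' t'' : Finset α) (ht' : t' ∈ T) (ht'' : t'' ∈ T)
    (hcap : (t' ∩ t'').card = 2) (hx : x ∈ t' ∩ t'') :
    ((T.filter (fun t => x ∈ t)).biUnion
      (fun t => (t.powersetCard 2).filter (fun p => x ∈ p))).card + 1 ≤
    2 * (T.filter (fun t => x ∈ t)).card := by
  have hne : t' ≠ t'' := by
    rintro rfl
    rw [Finset.inter_self, hT3 t' ht'] at hcap
    omega
  set Tx := T.filter (fun t => x ∈ t) with hTx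
  set f : Finset α → Finset (Finset α) :=
    fun t => (t.powersetCard 2).filter (fun p => x ∈ p) with hf
  have hx' : x ∈ t' := (Finset.mem_inter.mp hx).1
  have hx'' : x ∈ t'' := (Finset.mem_inter.mp hx).2
  have ht'x : t' ∈ Tx := mem_filter.mpr ⟨ht', hx'⟩
  have ht''x : t'' ∈ Tx := mem_filter.mpr ⟨ht'', hx''⟩
  have hq' : t' ∩ t'' ∈ f t' :=
    mem_filter.mpr ⟨mem_powersetCard.mpr ⟨Finset.inter_subset_left, hcap⟩, hx⟩
  have hq'' : t' ∩ t'' ∈ f t'' :=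
    mem_filter.mpr ⟨mem_powersetCard.mpr ⟨Finset.inter_subset_right, hcap⟩, hx⟩
  have hB : Tx.biUnion f = f t'' ∪ (Tx.erase t'').biUnion f := by
    conv_lhs => rw [← Finset.insert_erase ht''x]
    rw [Finset.biUnion_insert]
  have hqB' : t' ∩ t'' ∈ (Tx.erase t'').biUnion f :=
    mem_biUnion.mpr ⟨t', Finset.mem_erase.mpr ⟨hne, ht'x⟩, hq'⟩
  have hinter : 1 ≤ (f t'' ∩ (Tx.erase t'').biUnion f).card :=
    Finset.card_pos.mpr ⟨t' ∩ t'', Finset.mem_inter.mpr ⟨hq'', hqB'⟩⟩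
  have hcu := Finset.card_union_add_card_inter (f t'') ((Tx.erase t'').biUnion f)
  have hB' : ((Tx.erase t'').biUnion f).card ≤ 2 * (Tx.erase t'').card :=
    wld_biUnion_le_gen _ x (fun t ht => by
      have hm := Finset.mem_filter.mp (Finset.mem_of_mem_erase ht)
      exact ⟨hm.2, hT3 t hm.1⟩)
  have hft'' : (f t'').card = 2 := by
    rw [hf]
    rw [wld_pairsAt_card t'' x hx'', hT3 t'' ht'']
  have herase : (Tx.erase t'').card = Tx.card - 1 := Finset.card_erase_of_mem ht''x
  have hTxpos : 0 < Tx.card := Finset.card_pos.mpr ⟨t'', ht''x⟩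
  rw [hB]
  omega

end WLD

theorem weight_lower_d {α : Type*} [DecidableEq α] (a : ℕ) (ha : a % 6 = 0 ∨ a % 6 = 2)
    (A : Finset α) (hA : A.card = a) (T : Finset (Finset α)) (hT : IsTripleFamily A T) :
    (1 / 2) * (⌈(2 * (a : ℚ)^2 - a) / 6⌉ : ℚ) +
      (1 / 2) * (⌈(((A.filter fun x => ∃ t' ∈ T, ∃ t'' ∈ T,
        (t' ∩ t'').card = 2 ∧ x ∈ t' ∩ t'').card : ℚ) / 6)⌉ : ℚ)
    ≤ weight A T := by
  have hT3 : ∀ t ∈ T, t.card = 3 := fun t ht => (hT t ht).2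
  have hUprop : ∀ p ∈ uncoveredPairs A T, p ⊆ A ∧ p.card = 2 := by
    intro p hp
    rw [uncoveredPairs, mem_filter, mem_powersetCard] at hp
    exact ⟨hp.1.1, hp.1.2⟩
  have hsumr : ∑ x ∈ A, (T.filter (fun t => x ∈ t)).card = 3 * T.card :=
    wld_sum_card A T 3 (fun t ht => hT t ht)
  have hsumu : ∑ x ∈ A, ((uncoveredPairs A T).filter (fun p => x ∈ p)).card
      = 2 * (uncoveredPairs A T).card :=
    wld_sum_card A (uncoveredPairs A T) 2 hUprop
  -- per-vertex inequality
  have hvert : ∀ x ∈ A,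
      2 * a + (if (∃ t' ∈ T, ∃ t'' ∈ T, (t' ∩ t'').card = 2 ∧ x ∈ t' ∩ t'') then 1 else 0)
      ≤ 4 * (T.filter (fun t => x ∈ t)).card
        + 3 * ((uncoveredPairs A T).filter (fun p => x ∈ p)).card + 1 := by
    intro x hx
    have hbase := wld_base A T x hx
    have hb1 := wld_biUnion_le_gen (T.filter (fun t => x ∈ t)) x
      (fun t ht => ⟨(mem_filter.mp ht).2, hT3 t (mem_filter.mp ht).1⟩)
    rw [hA] at hbase
    have haeven : a % 2 = 0 := by omega
    by_cases hd : ∃ t' ∈ T, ∃ t'' ∈ T, (t' ∩ t'').card = 2 ∧ x ∈ t' ∩ t''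
    · obtain ⟨t', ht', t'', ht'', hcap, hxc⟩ := hd
      have hb2 := wld_biUnion_le' T hT3 x t' t'' ht' ht'' hcap hxc
      rw [if_pos ⟨t', ht', t'', ht'', hcap, hxc⟩]
      omega
    · rw [if_neg hd]
      omega
  have hsum := Finset.sum_le_sum hvert
  rw [Finset.sum_add_distrib, Finset.sum_const, hA, smul_eq_mul] at hsum
  rw [Finset.sum_add_distrib, Finset.sum_add_distrib, ← Finset.mul_sum, ← Finset.mul_sum,
    hsumr, hsumu, Finset.sum_const, hA, smul_eq_mul, mul_one] at hsum
  rw [← Finset.card_filter] at hsum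
  -- hsum : a * (2*a) + D.card ≤ 4*(3*T.card) + 3*(2*U.card) + a
  obtain ⟨j, hj⟩ : ∃ j, a = 6 * j ∨ a = 6 * j + 2 := ⟨a / 6, by omega⟩
  obtain ⟨m, hm⟩ : ∃ m, 6 * m + a = 2 * (a * a) := by
    rcases hj with rfl | rfl
    · refine ⟨12 * (j * j) - j, ?_⟩
      have h2 : j ≤ 12 * (j * j) := by nlinarith
      have e : 2 * ((6 * j) * (6 * j)) = 6 * (12 * (j * j)) + 0 := by ring
      rw [e]
      set s := j * j with hs
      omega
    · refine ⟨12 * (j * j) + 7 * j + 1, ?_⟩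
      have e : 2 * ((6 * j + 2) * (6 * j + 2)) = 72 * (j * j) + 48 * j + 8 := by ring
      rw [e]
      set s := j * j with hs
      omega
  have key : 6 * m + (A.filter fun x => ∃ t' ∈ T, ∃ t'' ∈ T,
      (t' ∩ t'').card = 2 ∧ x ∈ t' ∩ t'').card
      ≤ 6 * (2 * T.card + (uncoveredPairs A T).card) := by
    nlinarith [hsum, hm]
  -- now the rational arithmetic
  have hmq : 6 * (m : ℚ) + a = 2 * (a : ℚ) ^ 2 := by
    have := congrArg (Nat.cast : ℕ → ℚ) hm
    push_cast at this
    nlinarith [this]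
  have e1 : (2 * (a : ℚ)^2 - a) / 6 = (m : ℚ) := by
    field_simp
    linarith [hmq]
  rw [e1, Int.ceil_natCast]
  set Dc := (A.filter fun x => ∃ t' ∈ T, ∃ t'' ∈ T,
      (t' ∩ t'').card = 2 ∧ x ∈ t' ∩ t'').card with hDc
  have e2 : ⌈(Dc : ℚ) / 6⌉ ≤ (2 * T.card + (uncoveredPairs A T).card : ℤ) - m := by
    rw [Int.ceil_le]
    rw [div_le_iff₀ (by norm_num : (0:ℚ) < 6)]
    have hkq : (6 * m + Dc : ℚ) ≤ 6 * (2 * T.card + (uncoveredPairs A T).card) := by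
      exact_mod_cast key
    push_cast
    push_cast at hkq
    linarith
  have e2' : ((⌈(Dc : ℚ) / 6⌉ : ℤ) : ℚ) ≤ 2 * T.card + (uncoveredPairs A T).card - m := by
    have : ((⌈(Dc : ℚ) / 6⌉ : ℤ) : ℚ) ≤ ((2 * T.card + (uncoveredPairs A T).card : ℤ) - m : ℤ) := by exact_mod_cast e2
    push_cast at this
    linarith [this]
  rw [weight]
  push_cast
  linarith [e2']
end

section
/- For a ≡ 0 or 2 (mod 6) and b odd, f(a,b) ≥ (b−1)·C_*(a) + C(a), where C_*(a) = (2a²−a)/12 and C(a) = ceil((a/3)·ceil((a−1)/2)) is the minimum size of an (a,3,2)-covering design. -/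
/-!
For `x ∈ B`, the blocks with three points in `A` and fourth point `x` give a triple system `T_x` on
`A`; every pair it leaves uncovered lies, together with `x`, in a block with exactly two points in
`A`, and such a block serves two points of `B`. Hence `12 |Q| ≥ ∑ₓ (12 |T_x| + 6 |U_x|) + 6 D`,
where `U_x` are the pairs uncovered by `T_x` and `D` counts the pairs uncovered an odd number of
times. Counting the pairs through each `v ∈ A` (with `|A|` even) gives
`12 |T_x| + 6 |U_x| ≥ |A| (2 |A| - 1)`, plus one for every `v` of even uncovered degree; since `|B|`
is odd, a vertex never earning that bonus lies on a pair counted by `D`. This yields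
`12 f(a, b) ≥ ab(2a - 1) + a`, improved by `4` through divisibility by `6` when `a ≡ 2 (mod 6)`.
This matches `(b - 1)(2a² - a) + 12 C(a)` because the Fort–Hedlund coverings, built on
`{0, …, 2t-1} × ℤ/3` from a half-idempotent commutative quasigroup (with two points at infinity
when `a = 6t + 2`), show `12 C(a) ≤ 2a² + 4·[a ≡ 2 (mod 6)]`.
-/

open Finset

section TripleFamilies

variable {α : Type*} [DecidableEq α] {A : Finset α} {T : Finset (Finset α)}

lemma sum_card_filter_mem_of_forall {F : Finset (Finset α)} {k : ℕ}
    (hF : ∀ s ∈ F, s ⊆ A ∧ #s = k) : ∑ v ∈ A, #{s ∈ F | v ∈ s} = k * #F := by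
  calc ∑ v ∈ A, #{s ∈ F | v ∈ s} = ∑ s ∈ F, #{v ∈ A | v ∈ s} :=
        sum_card_bipartiteAbove_eq_sum_card_bipartiteBelow _
    _ = ∑ _s ∈ F, k := sum_congr rfl fun s hs => by
        rw [filter_mem_eq_inter, inter_eq_right.2 (hF s hs).1, (hF s hs).2]
    _ = k * #F := by rw [sum_const, smul_eq_mul, mul_comm]

lemma IsTripleFamily.union {T₁ T₂ : Finset (Finset α)} (h₁ : IsTripleFamily A T₁)
    (h₂ : IsTripleFamily A T₂) : IsTripleFamily A (T₁ ∪ T₂) :=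
  fun τ hτ => (mem_union.1 hτ).elim (h₁ τ) (h₂ τ)

lemma IsTripleFamily.mono {A' : Finset α} {T : Finset (Finset α)} (h : IsTripleFamily A T)
    (hA : A ⊆ A') : IsTripleFamily A' T :=
  fun τ hτ => ⟨(h τ hτ).1.trans hA, (h τ hτ).2⟩

lemma triple_subset_and_card {P Q R : α} (hP : P ∈ A) (hQ : Q ∈ A) (hR : R ∈ A) (hPQ : P ≠ Q)
    (hPR : P ≠ R) (hQR : Q ≠ R) : {P, Q, R} ⊆ A ∧ #({P, Q, R} : Finset α) = 3 :=
  ⟨insert_subset hP (insert_subset hQ (singleton_subset_iff.2 hR)),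
    card_eq_three.2 ⟨P, Q, R, hPQ, hPR, hQR, rfl⟩⟩

lemma mem_uncoveredPairs {p : Finset α} :
    p ∈ uncoveredPairs A T ↔ (p ⊆ A ∧ #p = 2) ∧ ∀ τ ∈ T, ¬ p ⊆ τ := by
  rw [uncoveredPairs, mem_filter, mem_powersetCard]

lemma uncoveredPairs_subset : uncoveredPairs A T ⊆ A.powersetCard 2 :=
  filter_subset _ _

/-- Each pair `{v, w}` is covered by one of the triples through `v`, each of which accounts for
two such `w`, or it is uncovered. -/
lemma IsTripleFamily.card_sub_one_le (hT : IsTripleFamily A T) {v : α} (hv : v ∈ A) :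
    #A - 1 ≤ 2 * #{τ ∈ T | v ∈ τ} + #{p ∈ uncoveredPairs A T | v ∈ p} := by
  have hsub : A.erase v ⊆ {τ ∈ T | v ∈ τ}.biUnion (·.erase v) ∪
      {p ∈ uncoveredPairs A T | v ∈ p}.biUnion (·.erase v) := by
    intro w hw
    obtain ⟨hwv, hwA⟩ := mem_erase.1 hw
    have hvw : ({v, w} : Finset α) ⊆ A := insert_subset hv (singleton_subset_iff.2 hwA)
    by_cases hcov : ∃ τ ∈ T, ({v, w} : Finset α) ⊆ τ
    · obtain ⟨τ, hτ, hvwτ⟩ := hcov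
      refine mem_union_left _ (mem_biUnion.2 ⟨τ, mem_filter.2 ⟨hτ, hvwτ (by simp)⟩, ?_⟩)
      exact mem_erase.2 ⟨hwv, hvwτ (by simp)⟩
    · push Not at hcov
      have hp : {v, w} ∈ uncoveredPairs A T :=
        mem_uncoveredPairs.2 ⟨⟨hvw, card_pair hwv.symm⟩, hcov⟩
      exact mem_union_right _ (mem_biUnion.2 ⟨_, mem_filter.2 ⟨hp, by simp⟩, by simp [hwv]⟩)
  have h2 := card_biUnion_le_card_mul {τ ∈ T | v ∈ τ} (·.erase v) 2 fun τ hτ => by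
    obtain ⟨hτ, hvτ⟩ := mem_filter.1 hτ
    rw [card_erase_of_mem hvτ, (hT τ hτ).2]
  have h1 := card_biUnion_le_card_mul {p ∈ uncoveredPairs A T | v ∈ p} (·.erase v) 1
    fun p hp => by
      obtain ⟨hp, hvp⟩ := mem_filter.1 hp
      rw [card_erase_of_mem hvp, (mem_uncoveredPairs.1 hp).1.2]
  have := (card_le_card hsub).trans (card_union_le _ _)
  rw [card_erase_of_mem hv] at this
  omega

/-- As `#A - 1` is odd, an even number `u` of uncovered pairs through `v` forces
`2 * #{τ ∈ T | v ∈ τ} + u ≥ #A`, while an odd `u` is at least `1`. -/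
lemma IsTripleFamily.two_mul_card_sub_one_add_le (hT : IsTripleFamily A T) (hA : Even #A)
    {v : α} (hv : v ∈ A) :
    2 * #A - 1 + (if Even #{p ∈ uncoveredPairs A T | v ∈ p} then 1 else 0) ≤
      4 * #{τ ∈ T | v ∈ τ} + 3 * #{p ∈ uncoveredPairs A T | v ∈ p} := by
  have := hT.card_sub_one_le hv
  have := card_pos.2 ⟨v, hv⟩
  obtain ⟨k, hk⟩ := hA
  split_ifs with hu
  · obtain ⟨l, hl⟩ := hu
    omega
  · obtain ⟨l, hl⟩ := Nat.not_even_iff_odd.1 hu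
    omega

end TripleFamilies

section Covers

variable {α β : Type*} [DecidableEq α] [DecidableEq β]

lemma isCover_of_forall_mem {A : Finset α} {T : Finset (Finset α)} (hT : IsTripleFamily A T)
    (h : ∀ P ∈ A, ∀ Q ∈ A, P ≠ Q → ∃ τ ∈ T, P ∈ τ ∧ Q ∈ τ) : IsCover A T := by
  refine ⟨hT, fun p hpA hp => ?_⟩
  obtain ⟨P, Q, hPQ, rfl⟩ := card_eq_two.1 hp
  obtain ⟨τ, hτ, hP, hQ⟩ := h P (hpA (by simp)) Q (hpA (by simp)) hPQ
  exact ⟨τ, hτ, insert_subset hP (singleton_subset_iff.2 hQ)⟩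

lemma IsCover.image {A : Finset α} {T : Finset (Finset α)} (hT : IsCover A T) {f : α → β}
    (hf : Set.InjOn f A) : IsCover (A.image f) (T.image (image f)) := by
  refine isCover_of_forall_mem ?_ ?_
  · simp only [IsTripleFamily, mem_image]
    rintro _ ⟨τ, hτ, rfl⟩
    obtain ⟨hτA, hτ3⟩ := hT.1 τ hτ
    exact ⟨image_subset_image hτA, (card_image_of_injOn (hf.mono hτA)).trans hτ3⟩
  · simp only [mem_image]
    rintro _ ⟨u, hu, rfl⟩ _ ⟨w, hw, rfl⟩ hne
    have huw : u ≠ w := fun h => hne (h ▸ rfl)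
    obtain ⟨τ, hτ, hsub⟩ := hT.2 {u, w} (insert_subset hu (singleton_subset_iff.2 hw))
      (card_pair huw)
    exact ⟨τ.image f, ⟨τ, hτ, rfl⟩, mem_image_of_mem f (hsub (by simp)),
      mem_image_of_mem f (hsub (by simp))⟩

lemma IsCover.coverNum_le {n : ℕ} {T : Finset (Finset ℕ)} (hT : IsCover (range n) T) :
    coverNum n ≤ #T :=
  Nat.sInf_le ⟨T, hT, rfl⟩

/-- Transport the cover to `range #A` along a numbering of `A`. -/
lemma IsCover.coverNum_card_le {A : Finset α} {T : Finset (Finset α)} (hT : IsCover A T) :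
    coverNum #A ≤ #T := by
  let f : α → ℕ := fun v => if h : v ∈ A then A.equivFin ⟨v, h⟩ else 0
  have hf : Set.InjOn f A := fun u hu w hw huw => by
    simp only [f, dif_pos (mem_coe.1 hu), dif_pos (mem_coe.1 hw)] at huw
    exact congrArg Subtype.val (A.equivFin.injective (Fin.ext huw))
  have hfA : A.image f = range #A := by
    ext m
    simp only [mem_image, mem_range]
    refine ⟨?_, fun hm => ⟨A.equivFin.symm ⟨m, hm⟩, (A.equivFin.symm _).2, by simp [f]⟩⟩
    rintro ⟨v, hv, rfl⟩
    simp [f, hv]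
  have := hT.image hf
  rw [hfA] at this
  exact this.coverNum_le.trans card_image_le

end Covers

section Quasigroup

/-- A bijection of `{0, …, 2t-1}`, so that `qmul c t`, written `x ∘ y`, is a commutative
quasigroup on it with `x ∘ x = (x % t + c) % t`. -/
def halfMap (c t s : ℕ) : ℕ := if Even s then (s / 2 + c) % t else t + s / 2

def qmul (c t x y : ℕ) : ℕ := halfMap c t ((x + y) % (2 * t))

variable {c t : ℕ}

lemma halfMap_lt {s : ℕ} (hs : s < 2 * t) : halfMap c t s < 2 * t := by
  unfold halfMap
  split_ifs
  · have := Nat.mod_lt (s / 2 + c) (show 0 < t by omega)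
    omega
  · omega

lemma halfMap_injOn : Set.InjOn (halfMap c t) (range (2 * t)) := by
  intro s₁ hs₁ s₂ hs₂ h
  simp only [coe_range, Set.mem_Iio] at hs₁ hs₂
  have ht : 0 < t := by omega
  unfold halfMap at h
  split_ifs at h with h₁ h₂ h₂
  · have hmod : s₁ / 2 ≡ s₂ / 2 [MOD t] := Nat.ModEq.add_right_cancel' c h
    rw [Nat.ModEq, Nat.mod_eq_of_lt (by omega), Nat.mod_eq_of_lt (by omega)] at hmod
    obtain ⟨k₁, rfl⟩ := h₁
    obtain ⟨k₂, rfl⟩ := h₂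
    omega
  · have := Nat.mod_lt (s₁ / 2 + c) ht
    omega
  · have := Nat.mod_lt (s₂ / 2 + c) ht
    omega
  · rw [Nat.not_even_iff_odd] at h₁ h₂
    obtain ⟨k₁, rfl⟩ := h₁
    obtain ⟨k₂, rfl⟩ := h₂
    omega

lemma qmul_lt {x y : ℕ} (hx : x < 2 * t) : qmul c t x y < 2 * t :=
  halfMap_lt (Nat.mod_lt _ (by omega))

lemma exists_qmul_eq {x z : ℕ} (hx : x < 2 * t) (hz : z < 2 * t) :
    ∃ y < 2 * t, qmul c t x y = z := by
  have hinj : Set.InjOn (qmul c t x) (range (2 * t)) := by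
    intro y₁ hy₁ y₂ hy₂ h
    simp only [coe_range, Set.mem_Iio] at hy₁ hy₂
    have := halfMap_injOn (mem_range.2 (Nat.mod_lt _ (by omega)))
      (mem_range.2 (Nat.mod_lt _ (by omega))) h
    have hmod : y₁ ≡ y₂ [MOD 2 * t] := Nat.ModEq.add_left_cancel' x this
    rwa [Nat.ModEq, Nat.mod_eq_of_lt hy₁, Nat.mod_eq_of_lt hy₂] at hmod
  obtain ⟨y, hy, rfl⟩ := surjOn_of_injOn_of_card_le _
    (fun y _ => mem_range.2 (qmul_lt hx)) hinj le_rfl (mem_range.2 hz)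
  exact ⟨y, mem_range.1 hy, rfl⟩

lemma qmul_self (x : ℕ) : qmul c t x x = (x % t + c) % t := by
  have h : (x + x) % (2 * t) = 2 * (x % t) := by rw [← two_mul, Nat.mul_mod_mul_left]
  rw [qmul, h, halfMap, if_pos (even_two_mul _), Nat.mul_div_cancel_left _ two_pos]

end Quasigroup

section Grid

def grid (t : ℕ) : Finset (ℕ × ZMod 3) := range (2 * t) ×ˢ univ

/-- The triple `{(x, i), (y, i), (x ∘ y, i + 1)}` for the pair `e = {x, y}`. -/
def pairBlock (c t : ℕ) (e : Finset ℕ) (i : ZMod 3) : Finset (ℕ × ZMod 3) :=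
  insert (halfMap c t ((∑ x ∈ e, x) % (2 * t)), i + 1) (e ×ˢ {i})

def pairBlocks (c t : ℕ) : Finset (Finset (ℕ × ZMod 3)) :=
  ((range (2 * t)).powersetCard 2 ×ˢ univ).image fun ei => pairBlock c t ei.1 ei.2

variable {c t : ℕ}

lemma card_grid (t : ℕ) : #(grid t) = 6 * t := by
  rw [grid, card_product, card_range, card_univ, ZMod.card]
  ring

lemma isTripleFamily_pairBlocks : IsTripleFamily (grid t) (pairBlocks c t) := by
  simp only [IsTripleFamily, pairBlocks, mem_image, mem_product, mem_powersetCard]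
  rintro _ ⟨⟨e, i⟩, ⟨⟨heA, he2⟩, -⟩, rfl⟩
  have ht : 0 < t := by
    obtain ⟨x, hx⟩ := card_pos.1 (he2 ▸ two_pos : 0 < #e)
    have := mem_range.1 (heA hx)
    omega
  refine ⟨insert_subset ?_ (product_subset_product heA (subset_univ _)), ?_⟩
  · exact mem_product.2 ⟨mem_range.2 (halfMap_lt (Nat.mod_lt _ (by omega))), mem_univ _⟩
  · rw [pairBlock, card_insert_of_notMem (by simp), card_product, he2, card_singleton]

lemma card_pairBlocks_add_le (c t : ℕ) : #(pairBlocks c t) + 3 * t ≤ 6 * t ^ 2 := by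
  have hchoose : (2 * t).choose 2 + t = 2 * t ^ 2 := by
    rw [Nat.choose_two_right, mul_assoc, Nat.mul_div_cancel_left _ two_pos]
    cases t with
    | zero => rfl
    | succ n => rw [show 2 * (n + 1) - 1 = 2 * n + 1 by omega]; ring
  have := card_image_le (s := (range (2 * t)).powersetCard 2 ×ˢ (univ : Finset (ZMod 3)))
    (f := fun ei => pairBlock c t ei.1 ei.2)
  rw [card_product, card_powersetCard, card_range, card_univ, ZMod.card] at this
  rw [pairBlocks]
  omega

lemma exists_pairBlock {x y : ℕ} (hx : x < 2 * t) (hy : y < 2 * t) (hxy : x ≠ y) (i : ZMod 3) :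
    ∃ τ ∈ pairBlocks c t, (x, i) ∈ τ ∧ (y, i) ∈ τ ∧ (qmul c t x y, i + 1) ∈ τ := by
  refine ⟨pairBlock c t {x, y} i, mem_image.2 ⟨({x, y}, i), ?_, rfl⟩, ?_, ?_, ?_⟩
  · simp only [mem_product, mem_powersetCard, mem_univ, and_true]
    exact ⟨insert_subset (mem_range.2 hx) (singleton_subset_iff.2 (mem_range.2 hy)), card_pair hxy⟩
  · simp [pairBlock]
  · simp [pairBlock]
  · simp [pairBlock, qmul, sum_pair hxy]

/-- `(x % t + c) % t` is `x ∘ x`: the pairs `(x, i), (x ∘ x, i + 1)` are the only pairs of the grid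
not in a pair block. -/
lemma exists_cover_grid_pair {T : Finset (Finset (ℕ × ZMod 3))} (hT : pairBlocks c t ⊆ T)
    (hdiag : ∀ x < 2 * t, ∀ i : ZMod 3, ∃ τ ∈ T, (x, i) ∈ τ ∧ ((x % t + c) % t, i + 1) ∈ τ)
    {P Q : ℕ × ZMod 3} (hP : P ∈ grid t) (hQ : Q ∈ grid t) (hPQ : P ≠ Q) :
    ∃ τ ∈ T, P ∈ τ ∧ Q ∈ τ := by
  have hnext : ∀ x < 2 * t, ∀ z < 2 * t, ∀ i : ZMod 3, ∃ τ ∈ T, (x, i) ∈ τ ∧ (z, i + 1) ∈ τ := by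
    intro x hx z hz i
    obtain ⟨y, hy, rfl⟩ := exists_qmul_eq (c := c) hx hz
    by_cases hxy : x = y
    · subst hxy
      rw [qmul_self]
      exact hdiag x hx i
    · obtain ⟨τ, hτ, hxτ, -, hzτ⟩ := exists_pairBlock (c := c) hx hy hxy i
      exact ⟨τ, hT hτ, hxτ, hzτ⟩
  obtain ⟨x, i⟩ := P
  obtain ⟨y, j⟩ := Q
  simp only [grid, mem_product, mem_range, mem_univ, and_true] at hP hQ
  have hlevel : ∀ i j : ZMod 3, j = i ∨ j = i + 1 ∨ i = j + 1 := by decide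
  obtain rfl | rfl | rfl := hlevel i j
  · obtain ⟨τ, hτ, hxτ, hyτ, -⟩ := exists_pairBlock (c := c) hP hQ (fun h => hPQ (h ▸ rfl)) _
    exact ⟨τ, hT hτ, hxτ, hyτ⟩
  · exact hnext x hP y hQ i
  · obtain ⟨τ, hτ, hy, hx⟩ := hnext y hQ x hP j
    exact ⟨τ, hτ, hx, hy⟩

def patches (t : ℕ) (f : ℕ → ZMod 3 → Finset (ℕ × ZMod 3)) : Finset (Finset (ℕ × ZMod 3)) :=
  (range t ×ˢ univ).image fun ri => f ri.1 ri.2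

lemma mem_patches {f : ℕ → ZMod 3 → Finset (ℕ × ZMod 3)} {r : ℕ} (hr : r < t) (i : ZMod 3) :
    f r i ∈ patches t f :=
  mem_image.2 ⟨(r, i), by simpa using hr, rfl⟩

lemma card_patches_le (t : ℕ) (f : ℕ → ZMod 3 → Finset (ℕ × ZMod 3)) :
    #(patches t f) ≤ 3 * t := by
  refine card_image_le.trans_eq ?_
  rw [card_product, card_range, card_univ, ZMod.card, mul_comm]

end Grid

section SixT

def patchA (t r : ℕ) (i : ZMod 3) : Finset (ℕ × ZMod 3) :=
  {(t + r, i), ((r + 1) % t, i + 1), ((r + 2) % t, i + 2)}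

/-- For `c = 1` the pairs `(x, i), (x ∘ x, i + 1)` left by the pair blocks chain up, two to a
patch. -/
def coverA (t : ℕ) : Finset (Finset (ℕ × ZMod 3)) := pairBlocks 1 t ∪ patches t (patchA t)

lemma isTripleFamily_patchesA (t : ℕ) : IsTripleFamily (grid t) (patches t (patchA t)) := by
  simp only [IsTripleFamily, patches, mem_image, mem_product, mem_range, mem_univ, and_true]
  rintro _ ⟨⟨r, i⟩, hr, rfl⟩
  dsimp only at hr ⊢
  have hmem : ∀ {x : ℕ} (j : ZMod 3), x < 2 * t → (x, j) ∈ grid t := fun j hx => by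
    simpa [grid] using hx
  have hsnd : ∀ {x y : ℕ} {i j : ZMod 3}, i ≠ j → (x, i) ≠ (y, j) :=
    fun h e => h (congrArg Prod.snd e)
  have h1 := Nat.mod_lt (r + 1) (show 0 < t by omega)
  have h2 := Nat.mod_lt (r + 2) (show 0 < t by omega)
  exact triple_subset_and_card (hmem _ (by omega)) (hmem _ (by omega)) (hmem _ (by omega))
    (hsnd (by simp)) (hsnd (by simp [show (2 : ZMod 3) ≠ 0 by decide]))
    (hsnd (by simp [show (1 : ZMod 3) ≠ 2 by decide]))

lemma isCover_coverA (t : ℕ) : IsCover (grid t) (coverA t) := by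
  refine isCover_of_forall_mem (isTripleFamily_pairBlocks.union (isTripleFamily_patchesA t))
    fun P hP Q hQ hPQ => exists_cover_grid_pair subset_union_left (fun x hx i => ?_) hP hQ hPQ
  rcases le_or_gt t x with htx | hxt
  · have hxt : x % t = x - t := by rw [Nat.mod_eq_sub_mod htx, Nat.mod_eq_of_lt (by omega)]
    refine ⟨patchA t (x - t) i, mem_union_right _ (mem_patches (by omega) i), ?_, ?_⟩ <;>
      simp [patchA, hxt, Nat.add_sub_cancel' htx]
  · have ht : 0 < t := by omega
    have h1 : ((x + t - 1) % t + 1) % t = x := by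
      rw [Nat.mod_add_mod, Nat.sub_add_cancel (by omega), Nat.add_mod_right, Nat.mod_eq_of_lt hxt]
    have h2 : ((x + t - 1) % t + 2) % t = (x % t + 1) % t := by
      rw [Nat.mod_add_mod, Nat.mod_eq_of_lt hxt, show x + t - 1 + 2 = x + 1 + t by omega,
        Nat.add_mod_right]
    refine ⟨patchA t ((x + t - 1) % t) (i + 2),
      mem_union_right _ (mem_patches (Nat.mod_lt _ ht) _), ?_, ?_⟩
    · have : i + 2 + 1 = i := by revert i; decide
      simp [patchA, h1, this]
    · have : i + 2 + 2 = i + 1 := by revert i; decide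
      simp [patchA, h2, this]

theorem coverNum_six_mul_le (t : ℕ) : coverNum (6 * t) ≤ 6 * t ^ 2 := by
  have hcover := (isCover_coverA t).coverNum_card_le
  rw [card_grid] at hcover
  have := card_union_le (pairBlocks 1 t) (patches t (patchA t))
  have := card_pairBlocks_add_le 1 t
  have := card_patches_le t (patchA t)
  rw [coverA] at hcover
  omega

end SixT

section SixTPlusTwo

/-- `grid t` with two points at infinity, `(2t, 0)` and `(2t, 1)`. -/
def extGrid (t : ℕ) : Finset (ℕ × ZMod 3) := insert (2 * t, 0) (insert (2 * t, 1) (grid t))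

def columns (t : ℕ) : Finset (Finset (ℕ × ZMod 3)) := (range t).image fun x => {x} ×ˢ univ

def patchB (t r : ℕ) (i : ZMod 3) : Finset (ℕ × ZMod 3) := {(2 * t, 0), (t + r, i), (r, i + 1)}

def fanB (t : ℕ) : Finset (Finset (ℕ × ZMod 3)) :=
  {{(2 * t, 1), (2 * t, 0), (0, 0)}, {(2 * t, 1), (2 * t - 1, 0), (0, 1)}} ∪
    (range (2 * t)).image (fun x => {(2 * t, 1), (x, 1), (x, 2)}) ∪
    (range (t - 1)).image (fun k => {(2 * t, 1), (2 * k + 1, 0), (2 * k + 2, 0)})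

/-- For `c = 0`, `x ∘ x = x % t`: the columns cover the pairs `(x, i), (x, i + 1)` with `x < t`,
the patches those with `x ≥ t` and join every point to `(2t, 0)`. -/
def coverB (t : ℕ) : Finset (Finset (ℕ × ZMod 3)) :=
  pairBlocks 0 t ∪ columns t ∪ patches t (patchB t) ∪ fanB t

variable {t : ℕ}

lemma card_extGrid (t : ℕ) : #(extGrid t) = 6 * t + 2 := by
  rw [extGrid, card_insert_of_notMem, card_insert_of_notMem, card_grid]
  · simp [grid]
  · simp [grid, show (0 : ZMod 3) ≠ 1 by decide]

lemma grid_subset_extGrid (t : ℕ) : grid t ⊆ extGrid t :=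
  (subset_insert _ _).trans (subset_insert _ _)

lemma mem_extGrid {x : ℕ} (hx : x < 2 * t) (i : ZMod 3) : (x, i) ∈ extGrid t :=
  grid_subset_extGrid t (by simpa [grid] using hx)

lemma isTripleFamily_columns (t : ℕ) : IsTripleFamily (grid t) (columns t) := by
  simp only [IsTripleFamily, columns, mem_image, mem_range]
  rintro _ ⟨x, hx, rfl⟩
  refine ⟨product_subset_product (singleton_subset_iff.2 (mem_range.2 (by omega))) le_rfl, ?_⟩
  rw [card_product, card_singleton, card_univ, ZMod.card, one_mul]

lemma isTripleFamily_patchesB (t : ℕ) : IsTripleFamily (extGrid t) (patches t (patchB t)) := by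
  simp only [IsTripleFamily, patches, mem_image, mem_product, mem_range, mem_univ, and_true]
  rintro _ ⟨⟨r, i⟩, hr, rfl⟩
  exact triple_subset_and_card (by simp [extGrid]) (mem_extGrid (by omega) _)
    (mem_extGrid (by omega) _) (ne_of_apply_ne Prod.fst (by dsimp only; omega))
    (ne_of_apply_ne Prod.fst (by dsimp only; omega)) (ne_of_apply_ne Prod.snd (by simp))

lemma isTripleFamily_fanB (ht : 0 < t) : IsTripleFamily (extGrid t) (fanB t) := by
  have h1 : ((2 * t, 1) : ℕ × ZMod 3) ∈ extGrid t := by simp [extGrid]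
  have h0 : ((2 * t, 0) : ℕ × ZMod 3) ∈ extGrid t := by simp [extGrid]
  have hfst : ∀ {x y : ℕ} {i j : ZMod 3}, x ≠ y → (x, i) ≠ (y, j) :=
    fun h e => h (congrArg Prod.fst e)
  have hsnd : ∀ {x y : ℕ} {i j : ZMod 3}, i ≠ j → (x, i) ≠ (y, j) :=
    fun h e => h (congrArg Prod.snd e)
  simp only [IsTripleFamily, fanB, mem_union, mem_insert, mem_singleton, mem_image, mem_range]
  rintro τ (((rfl | rfl) | ⟨x, hx, rfl⟩) | ⟨k, hk, rfl⟩)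
  · exact triple_subset_and_card h1 h0 (mem_extGrid (by omega) _) (hsnd (by decide))
      (hfst (by omega)) (hfst (by omega))
  · exact triple_subset_and_card h1 (mem_extGrid (by omega) _) (mem_extGrid (by omega) _)
      (hfst (by omega)) (hfst (by omega)) (hsnd (by decide))
  · exact triple_subset_and_card h1 (mem_extGrid hx _) (mem_extGrid hx _)
      (hfst (by omega)) (hfst (by omega)) (hsnd (by decide))
  · exact triple_subset_and_card h1 (mem_extGrid (by omega) _) (mem_extGrid (by omega) _)
      (hfst (by omega)) (hfst (by omega)) (hfst (by omega))

lemma isTripleFamily_coverB (ht : 0 < t) : IsTripleFamily (extGrid t) (coverB t) :=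
  (((isTripleFamily_pairBlocks.union (isTripleFamily_columns t)).mono (grid_subset_extGrid t)).union
    (isTripleFamily_patchesB t)).union (isTripleFamily_fanB ht)

lemma exists_cover_diag_coverB {x : ℕ} (hx : x < 2 * t) (i : ZMod 3) :
    ∃ τ ∈ columns t ∪ patches t (patchB t), (x, i) ∈ τ ∧ (x % t, i + 1) ∈ τ := by
  rcases le_or_gt t x with htx | hxt
  · have hxt : x % t = x - t := by rw [Nat.mod_eq_sub_mod htx, Nat.mod_eq_of_lt (by omega)]
    refine ⟨patchB t (x - t) i, mem_union_right _ (mem_patches (by omega) i), ?_, ?_⟩ <;>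
      simp [patchB, hxt, Nat.add_sub_cancel' htx]
  · exact ⟨{x} ×ˢ univ, mem_union_left _ (mem_image_of_mem _ (mem_range.2 hxt)), by simp,
      by simp [Nat.mod_eq_of_lt hxt]⟩

lemma exists_cover_infty_zero {x : ℕ} (hx : x < 2 * t) (i : ZMod 3) :
    ∃ τ ∈ patches t (patchB t), (2 * t, 0) ∈ τ ∧ (x, i) ∈ τ := by
  rcases le_or_gt t x with htx | hxt
  · exact ⟨patchB t (x - t) i, mem_patches (by omega) i, by simp [patchB],
      by simp [patchB, Nat.add_sub_cancel' htx]⟩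
  · have : i + 2 + 1 = i := by revert i; decide
    exact ⟨patchB t x (i + 2), mem_patches hxt _, by simp [patchB], by simp [patchB, this]⟩

lemma exists_cover_infty_one (ht : 0 < t) {P : ℕ × ZMod 3} (hP : P ∈ extGrid t)
    (hP1 : P ≠ (2 * t, 1)) : ∃ τ ∈ fanB t, (2 * t, 1) ∈ τ ∧ P ∈ τ := by
  have h0 : {(2 * t, 1), (2 * t, 0), (0, 0)} ∈ fanB t :=
    mem_union_left _ (mem_union_left _ (by simp))
  have hlast : {(2 * t, 1), (2 * t - 1, 0), (0, 1)} ∈ fanB t :=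
    mem_union_left _ (mem_union_left _ (by simp))
  have hcol : ∀ x < 2 * t, {(2 * t, 1), (x, 1), (x, 2)} ∈ fanB t := fun x hx =>
    mem_union_left _ (mem_union_right _ (mem_image_of_mem _ (mem_range.2 hx)))
  have hodd : ∀ k < t - 1, {(2 * t, 1), (2 * k + 1, 0), (2 * k + 2, 0)} ∈ fanB t := fun k hk =>
    mem_union_right _ (mem_image_of_mem _ (mem_range.2 hk))
  simp only [extGrid, grid, mem_insert, mem_product, mem_range, mem_univ, and_true] at hP
  obtain rfl | rfl | hP := hP
  · exact ⟨_, h0, by simp, by simp⟩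
  · exact absurd rfl hP1
  obtain ⟨x, i⟩ := P
  have hlevel : ∀ i : ZMod 3, i = 0 ∨ i = 1 ∨ i = 2 := by decide
  obtain rfl | rfl | rfl := hlevel i
  · obtain rfl | hx0 := eq_or_ne x 0
    · exact ⟨_, h0, by simp, by simp⟩
    obtain ⟨k, rfl | rfl⟩ : ∃ k, x = 2 * k + 1 ∨ x = 2 * k + 2 := ⟨(x - 1) / 2, by omega⟩
    · obtain hk | hk := eq_or_ne k (t - 1)
      · exact ⟨_, hlast, by simp, by simp [hk, show 2 * (t - 1) + 1 = 2 * t - 1 by omega]⟩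
      · exact ⟨_, hodd k (by dsimp at hP; omega), by simp, by simp⟩
    · exact ⟨_, hodd k (by dsimp at hP; omega), by simp, by simp⟩
  · exact ⟨_, hcol x hP, by simp, by simp⟩
  · exact ⟨_, hcol x hP, by simp, by simp⟩

lemma isCover_coverB (ht : 0 < t) : IsCover (extGrid t) (coverB t) := by
  have hblocks : pairBlocks 0 t ⊆ coverB t :=
    subset_union_left.trans (subset_union_left.trans subset_union_left)
  have hdiag : columns t ∪ patches t (patchB t) ⊆ coverB t := by
    rw [coverB, union_assoc (pairBlocks 0 t)]
    exact subset_union_right.trans subset_union_left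
  have hgrid : ∀ P ∈ grid t, ∀ Q ∈ grid t, P ≠ Q → ∃ τ ∈ coverB t, P ∈ τ ∧ Q ∈ τ :=
    fun P hP Q hQ hPQ => exists_cover_grid_pair hblocks (fun x hx i => by
      obtain ⟨τ, hτ, h⟩ := exists_cover_diag_coverB hx i
      exact ⟨τ, hdiag hτ, by simpa using h⟩) hP hQ hPQ
  have hinf0 : ∀ P ∈ grid t, ∃ τ ∈ coverB t, (2 * t, 0) ∈ τ ∧ P ∈ τ := by
    rintro ⟨x, i⟩ hP
    obtain ⟨τ, hτ, h⟩ := exists_cover_infty_zero (by simpa [grid] using hP) i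
    exact ⟨τ, hdiag (mem_union_right _ hτ), h⟩
  have hinf1 : ∀ P ∈ extGrid t, P ≠ (2 * t, 1) → ∃ τ ∈ coverB t, (2 * t, 1) ∈ τ ∧ P ∈ τ :=
    fun P hP hP1 => (exists_cover_infty_one ht hP hP1).imp fun τ ⟨hτ, h⟩ =>
      ⟨mem_union_right _ hτ, h⟩
  have hswap : ∀ {P Q : ℕ × ZMod 3}, (∃ τ ∈ coverB t, P ∈ τ ∧ Q ∈ τ) →
      ∃ τ ∈ coverB t, Q ∈ τ ∧ P ∈ τ := fun ⟨τ, hτ, hP, hQ⟩ => ⟨τ, hτ, hQ, hP⟩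
  refine isCover_of_forall_mem (isTripleFamily_coverB ht) fun P hP Q hQ hPQ => ?_
  have hP' := hP
  have hQ' := hQ
  rw [extGrid, mem_insert, mem_insert] at hP hQ
  rcases hP with rfl | rfl | hP <;> rcases hQ with rfl | rfl | hQ
  · exact absurd rfl hPQ
  · exact hswap (hinf1 _ hP' hPQ)
  · exact hinf0 Q hQ
  · exact hinf1 _ hQ' hPQ.symm
  · exact absurd rfl hPQ
  · exact hinf1 Q hQ' hPQ.symm
  · exact hswap (hinf0 P hP)
  · exact hswap (hinf1 P hP' hPQ)
  · exact hgrid P hP Q hQ hPQ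

lemma card_coverB_le (ht : 0 < t) : #(coverB t) ≤ 6 * t ^ 2 + 4 * t + 1 := by
  have hblocks := card_pairBlocks_add_le 0 t
  have hcolumns : #(columns t) ≤ t := card_image_le.trans (card_range t).le
  have hpatches := card_patches_le t (patchB t)
  have hfan : #(fanB t) ≤ 2 + 2 * t + (t - 1) := by
    refine (card_union_le _ _).trans (add_le_add ((card_union_le _ _).trans
      (add_le_add card_le_two ?_)) ?_) <;>
    exact card_image_le.trans (card_range _).le
  have := card_union_le (pairBlocks 0 t ∪ columns t ∪ patches t (patchB t)) (fanB t)
  have := card_union_le (pairBlocks 0 t ∪ columns t) (patches t (patchB t))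
  have := card_union_le (pairBlocks 0 t) (columns t)
  rw [coverB]
  omega

theorem coverNum_six_mul_add_two_le (ht : 0 < t) :
    coverNum (6 * t + 2) ≤ 6 * t ^ 2 + 4 * t + 1 := by
  have := (isCover_coverB ht).coverNum_card_le
  rw [card_extGrid] at this
  exact this.trans (card_coverB_le ht)

end SixTPlusTwo

/-- No triple fits in a 2-element set, so no cover exists and `coverNum 2` is `sInf ∅ = 0`. -/
lemma coverNum_two : coverNum 2 = 0 := by
  refine Nat.sInf_eq_zero.2 (Or.inr (Set.eq_empty_of_forall_notMem ?_))
  rintro n ⟨T, hT, -⟩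
  obtain ⟨τ, hτ, -⟩ := hT.2 {0, 1} (by decide) (by decide)
  have := card_le_card (hT.1 τ hτ).1
  rw [(hT.1 τ hτ).2, card_range] at this
  omega

theorem twelve_mul_coverNum_le {a : ℕ} (ha : a % 6 = 0 ∨ a % 6 = 2) :
    12 * coverNum a ≤ 2 * a ^ 2 + (if a % 6 = 2 then 4 else 0) := by
  obtain ⟨t, rfl | rfl⟩ : ∃ t, a = 6 * t ∨ a = 6 * t + 2 := ⟨a / 6, by omega⟩
  · rw [if_neg (by omega)]
    nlinarith [coverNum_six_mul_le t]
  · rw [if_pos (by omega)]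
    obtain rfl | ht := Nat.eq_zero_or_pos t
    · simp [coverNum_two]
    · nlinarith [coverNum_six_mul_add_two_le ht]


section ABSystems

variable {α : Type*} [DecidableEq α] {A B : Finset α} {Q : Finset (Finset α)}

/-- The link of `x`: the triples `q ∩ A` of the blocks `q ∋ x` with three points in `A`. -/
def linkTriples (A : Finset α) (Q : Finset (Finset α)) (x : α) : Finset (Finset α) :=
  {q ∈ Q | x ∈ q ∧ #(q ∩ A) = 3}.image (· ∩ A)

def linkUncovered (A : Finset α) (Q : Finset (Finset α)) (x : α) : Finset (Finset α) :=
  uncoveredPairs A (linkTriples A Q x)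

def uncoveredMult (A B : Finset α) (Q : Finset (Finset α)) (p : Finset α) : ℕ :=
  #{x ∈ B | p ∈ linkUncovered A Q x}

def oddPairs (A B : Finset α) (Q : Finset (Finset α)) : Finset (Finset α) :=
  {p ∈ A.powersetCard 2 | Odd (uncoveredMult A B Q p)}

lemma isTripleFamily_linkTriples (A : Finset α) (Q : Finset (Finset α)) (x : α) :
    IsTripleFamily A (linkTriples A Q x) := by
  simp only [IsTripleFamily, linkTriples, mem_image, mem_filter]
  rintro _ ⟨q, ⟨-, -, h3⟩, rfl⟩
  exact ⟨inter_subset_right, h3⟩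

lemma linkUncovered_subset (x : α) : linkUncovered A Q x ⊆ A.powersetCard 2 :=
  uncoveredPairs_subset

lemma sum_card_filter_linkUncovered (B : Finset α) (P : Finset (Finset α)) :
    ∑ x ∈ B, #{p ∈ P | p ∈ linkUncovered A Q x} = ∑ p ∈ P, uncoveredMult A B Q p :=
  sum_card_bipartiteAbove_eq_sum_card_bipartiteBelow _

lemma card_filter_add_sum_card_filter_inter_eq_le (A : Finset α) (Q : Finset (Finset α)) :
    #{q ∈ Q | #(q ∩ A) = 3} + ∑ p ∈ A.powersetCard 2, #{q ∈ Q | q ∩ A = p} ≤ #Q := by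
  have hfib : #{q ∈ Q | #(q ∩ A) = 2} = ∑ p ∈ A.powersetCard 2, #{q ∈ Q | q ∩ A = p} := by
    rw [card_eq_sum_card_fiberwise (f := (· ∩ A)) fun q hq =>
      mem_powersetCard.2 ⟨inter_subset_right, (mem_filter.1 hq).2⟩]
    refine sum_congr rfl fun p hp => congrArg card ?_
    rw [filter_filter]
    exact filter_congr fun q _ =>
      ⟨And.right, fun h => ⟨by simp only [h, (mem_powersetCard.1 hp).2], h⟩⟩
  rw [← hfib, ← card_union_of_disjoint (disjoint_filter.2 fun q _ h3 h2 => by omega)]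
  exact card_le_card (union_subset (filter_subset _ _) (filter_subset _ _))

lemma IsABSystem.card_inter_add_card_inter (hQ : IsABSystem A B Q) (hAB : Disjoint A B)
    {q : Finset α} (hq : q ∈ Q) : #(q ∩ A) + #(q ∩ B) = 4 := by
  rw [← card_union_of_disjoint (hAB.mono inter_subset_right inter_subset_right),
    ← inter_union_distrib_left, inter_eq_left.2 (hQ.1 q hq).1, (hQ.1 q hq).2]

lemma IsABSystem.exists_inter_eq_of_mem_linkUncovered (hQ : IsABSystem A B Q)
    (hAB : Disjoint A B) {x : α} (hx : x ∈ B) {p : Finset α} (hp : p ∈ linkUncovered A Q x) :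
    ∃ q ∈ Q, q ∩ A = p ∧ x ∈ q := by
  obtain ⟨⟨hpA, hp2⟩, hunc⟩ := mem_uncoveredPairs.1 hp
  have hxA : x ∉ A := disjoint_right.1 hAB hx
  have hxp : insert x p ∩ A = p := by rw [insert_inter_of_notMem hxA, inter_eq_left.2 hpA]
  obtain ⟨q, hq, hxpq⟩ := hQ.2 (insert x p)
    (insert_subset (mem_union_right _ hx) (hpA.trans subset_union_left))
    (by rw [card_insert_of_notMem fun h => hxA (hpA h), hp2]) (by rw [hxp, hp2])
  have hxq : x ∈ q := hxpq (mem_insert_self x p)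
  have hpq : p ⊆ q ∩ A := hxp ▸ inter_subset_inter_right hxpq
  have hB : 1 ≤ #(q ∩ B) := card_pos.2 ⟨x, mem_inter.2 ⟨hxq, hx⟩⟩
  have h4 := hQ.card_inter_add_card_inter hAB hq
  have hne3 : #(q ∩ A) ≠ 3 := fun h3 =>
    hunc _ (mem_image.2 ⟨q, mem_filter.2 ⟨hq, hxq, h3⟩, rfl⟩) hpq
  have hle := card_le_card hpq
  exact ⟨q, hq, (eq_of_subset_of_card_le hpq (by omega)).symm, hxq⟩

/-- Each block `q` with `q ∩ A = p` serves the two points of `q ∩ B`. -/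
lemma IsABSystem.uncoveredMult_add_le (hQ : IsABSystem A B Q) (hAB : Disjoint A B)
    {p : Finset α} (hp : #p = 2) :
    uncoveredMult A B Q p + (if Odd (uncoveredMult A B Q p) then 1 else 0) ≤
      2 * #{q ∈ Q | q ∩ A = p} := by
  have hsub : {x ∈ B | p ∈ linkUncovered A Q x} ⊆ {q ∈ Q | q ∩ A = p}.biUnion (· ∩ B) := by
    intro x hx
    obtain ⟨hxB, hxp⟩ := mem_filter.1 hx
    obtain ⟨q, hq, hqp, hxq⟩ := hQ.exists_inter_eq_of_mem_linkUncovered hAB hxB hxp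
    exact mem_biUnion.2 ⟨q, mem_filter.2 ⟨hq, hqp⟩, mem_inter.2 ⟨hxq, hxB⟩⟩
  have hle : uncoveredMult A B Q p ≤ #{q ∈ Q | q ∩ A = p} * 2 :=
    (card_le_card hsub).trans (card_biUnion_le_card_mul _ _ 2 fun q hq => by
      obtain ⟨hqQ, rfl⟩ := mem_filter.1 hq
      have := hQ.card_inter_add_card_inter hAB hqQ
      omega)
  split_ifs with h
  · obtain ⟨k, hk⟩ := h
    omega
  · omega

lemma IsABSystem.sum_card_linkTriples_le (hQ : IsABSystem A B Q) (hAB : Disjoint A B) :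
    ∑ x ∈ B, #(linkTriples A Q x) ≤ #{q ∈ Q | #(q ∩ A) = 3} :=
  calc ∑ x ∈ B, #(linkTriples A Q x)
      ≤ ∑ x ∈ B, #{q ∈ {q ∈ Q | #(q ∩ A) = 3} | x ∈ q} := sum_le_sum fun x _ =>
        card_image_le.trans_eq (by simp only [filter_filter, and_comm])
    _ = ∑ q ∈ {q ∈ Q | #(q ∩ A) = 3}, #{x ∈ B | x ∈ q} :=
        sum_card_bipartiteAbove_eq_sum_card_bipartiteBelow _
    _ = ∑ _q ∈ {q ∈ Q | #(q ∩ A) = 3}, 1 := sum_congr rfl fun q hq => by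
        obtain ⟨hq, h3⟩ := mem_filter.1 hq
        have := hQ.card_inter_add_card_inter hAB hq
        rw [filter_mem_eq_inter, inter_comm]
        omega
    _ = #{q ∈ Q | #(q ∩ A) = 3} := card_eq_sum_ones _ |>.symm

lemma IsABSystem.sum_add_six_mul_card_oddPairs_le (hQ : IsABSystem A B Q) (hAB : Disjoint A B) :
    ∑ x ∈ B, (12 * #(linkTriples A Q x) + 6 * #(linkUncovered A Q x)) +
      6 * #(oddPairs A B Q) ≤ 12 * #Q := by
  have hU : ∑ x ∈ B, #(linkUncovered A Q x) = ∑ p ∈ A.powersetCard 2, uncoveredMult A B Q p := by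
    rw [← sum_card_filter_linkUncovered B (A.powersetCard 2)]
    refine sum_congr rfl fun x _ => congrArg card ?_
    rw [filter_mem_eq_inter, inter_eq_right.2 (linkUncovered_subset x)]
  have hodd : #(oddPairs A B Q) =
      ∑ p ∈ A.powersetCard 2, if Odd (uncoveredMult A B Q p) then 1 else 0 := card_filter _ _
  have hpairs := sum_le_sum fun p (hp : p ∈ A.powersetCard 2) =>
    hQ.uncoveredMult_add_le hAB (mem_powersetCard.1 hp).2
  rw [sum_add_distrib, ← hodd, ← mul_sum] at hpairs
  have := hQ.sum_card_linkTriples_le hAB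
  have := card_filter_add_sum_card_filter_inter_eq_le A Q
  rw [sum_add_distrib, ← mul_sum, ← mul_sum, hU]
  omega

/-- If every link leaves an odd number of pairs through `v` uncovered, then, `#B` being odd, so
does the whole system, and some pair through `v` is left uncovered an odd number of times. -/
lemma one_le_card_filter_even_add_card_oddPairs (hB : Odd #B) (v : α) :
    1 ≤ #{x ∈ B | Even #{p ∈ linkUncovered A Q x | v ∈ p}} + #{p ∈ oddPairs A B Q | v ∈ p} := by
  by_contra! h
  have hall : #{x ∈ B | Even #{p ∈ linkUncovered A Q x | v ∈ p}} = 0 := by omega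
  rw [card_eq_zero, filter_eq_empty_iff] at hall
  have hsum : Odd (∑ x ∈ B, #{p ∈ linkUncovered A Q x | v ∈ p}) := by
    rwa [odd_sum_iff_odd_card_odd, filter_true_of_mem fun x hx => Nat.not_even_iff_odd.1 (hall hx)]
  have hswap : ∑ x ∈ B, #{p ∈ linkUncovered A Q x | v ∈ p} =
      ∑ p ∈ {p ∈ A.powersetCard 2 | v ∈ p}, uncoveredMult A B Q p := by
    rw [← sum_card_filter_linkUncovered B {p ∈ A.powersetCard 2 | v ∈ p}]
    refine sum_congr rfl fun x _ => congrArg card ?_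
    ext p
    simp only [mem_filter]
    exact ⟨fun ⟨hU, hvp⟩ => ⟨⟨linkUncovered_subset x hU, hvp⟩, hU⟩,
      fun ⟨⟨_, hvp⟩, hU⟩ => ⟨hU, hvp⟩⟩
  obtain ⟨p, hp, hodd⟩ : ∃ p ∈ {p ∈ A.powersetCard 2 | v ∈ p}, Odd (uncoveredMult A B Q p) := by
    by_contra! hev
    exact Nat.not_even_iff_odd.2 (hswap ▸ hsum)
      (even_sum _ fun p hp => Nat.not_odd_iff_even.1 (hev p hp))
  have : 0 < #{p ∈ oddPairs A B Q | v ∈ p} := card_pos.2 ⟨p, by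
    simp only [oddPairs, mem_filter] at hp ⊢
    exact ⟨⟨hp.1, hodd⟩, hp.2⟩⟩
  omega

lemma le_sum_add_two_mul_card_oddPairs (hA : Even #A) (hB : Odd #B) :
    #A * (#B * (2 * #A - 1)) + #A ≤
      ∑ x ∈ B, (12 * #(linkTriples A Q x) + 6 * #(linkUncovered A Q x)) +
        2 * #(oddPairs A B Q) := by
  have hlink : ∀ x, #A * (2 * #A - 1) + #{v ∈ A | Even #{p ∈ linkUncovered A Q x | v ∈ p}} ≤
      12 * #(linkTriples A Q x) + 6 * #(linkUncovered A Q x) := fun x => by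
    have := sum_le_sum fun v (hv : v ∈ A) =>
      (isTripleFamily_linkTriples A Q x).two_mul_card_sub_one_add_le hA hv
    rw [sum_add_distrib, sum_add_distrib, sum_const, smul_eq_mul, ← card_filter, ← mul_sum,
      ← mul_sum, sum_card_filter_mem_of_forall (isTripleFamily_linkTriples A Q x),
      sum_card_filter_mem_of_forall fun p hp => (mem_uncoveredPairs.1 hp).1] at this
    unfold linkUncovered
    omega
  have hvertex := sum_le_sum fun v (_ : v ∈ A) =>
    one_le_card_filter_even_add_card_oddPairs (A := A) (Q := Q) hB v
  rw [sum_const, smul_eq_mul, mul_one, sum_add_distrib,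
    sum_card_filter_mem_of_forall (F := oddPairs A B Q) fun p hp =>
      mem_powersetCard.1 (filter_subset _ _ hp)] at hvertex
  have hswap : ∑ v ∈ A, #{x ∈ B | Even #{p ∈ linkUncovered A Q x | v ∈ p}} =
      ∑ x ∈ B, #{v ∈ A | Even #{p ∈ linkUncovered A Q x | v ∈ p}} :=
    sum_card_bipartiteAbove_eq_sum_card_bipartiteBelow _
  have hlinks := sum_le_sum fun x (_ : x ∈ B) => hlink x
  rw [sum_add_distrib, sum_const, smul_eq_mul] at hlinks
  have := mul_left_comm #A #B (2 * #A - 1)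
  omega

lemma six_dvd_mul_two_mul_sub_one {a : ℕ} (ha : a % 6 = 0 ∨ a % 6 = 2) : 6 ∣ a * (2 * a - 1) := by
  obtain ⟨k, rfl | rfl⟩ : ∃ k, a = 6 * k ∨ a = 6 * k + 2 := ⟨a / 6, by omega⟩
  · exact dvd_mul_of_dvd_left (dvd_mul_right 6 k) _
  · rw [show 2 * (6 * k + 2) - 1 = 3 * (4 * k + 1) by omega]
    exact ⟨(3 * k + 1) * (4 * k + 1), by ring⟩

theorem IsABSystem.le_twelve_mul_card (hQ : IsABSystem A B Q) (hAB : Disjoint A B)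
    (hA : #A % 6 = 0 ∨ #A % 6 = 2) (hB : Odd #B) :
    #A * #B * (2 * #A - 1) + #A + (if #A % 6 = 2 then 4 else 0) ≤ 12 * #Q := by
  have hup := hQ.sum_add_six_mul_card_oddPairs_le hAB
  have hlow := le_sum_add_two_mul_card_oddPairs (A := A) (Q := Q) (Nat.even_iff.2 (by omega)) hB
  have hW : 6 ∣ ∑ x ∈ B, (12 * #(linkTriples A Q x) + 6 * #(linkUncovered A Q x)) :=
    dvd_sum fun x _ => ⟨2 * #(linkTriples A Q x) + #(linkUncovered A Q x), by ring⟩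
  have hM : 6 ∣ #A * (#B * (2 * #A - 1)) := by
    rw [mul_left_comm]
    exact dvd_mul_of_dvd_right (six_dvd_mul_two_mul_sub_one hA) _
  rw [mul_assoc]
  split_ifs <;> omega

end ABSystems

lemma isABSystem_powersetCard {α : Type*} [DecidableEq α] {A B : Finset α}
    (h : 4 ≤ #(A ∪ B)) : IsABSystem A B ((A ∪ B).powersetCard 4) := by
  refine ⟨fun q hq => mem_powersetCard.1 hq, fun T hT h3 _ => ?_⟩
  obtain ⟨q, hTq, hq, h4⟩ := exists_subsuperset_card_eq hT (by omega) h
  exact ⟨q, mem_powersetCard.2 ⟨hq, h4⟩, hTq⟩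

theorem le_twelve_mul_fAB {a b : ℕ} (ha : a % 6 = 0 ∨ a % 6 = 2) (hb : Odd b)
    (hab : 4 ≤ a + b) : a * b * (2 * a - 1) + a + (if a % 6 = 2 then 4 else 0) ≤ 12 * fAB a b := by
  have hAB : Disjoint (range a) (Ico a (a + b)) :=
    disjoint_left.2 fun x hx hx' => by simp only [mem_range, mem_Ico] at hx hx'; omega
  have hne : {n | ∃ Q, IsABSystem (range a) (Ico a (a + b)) Q ∧ #Q = n}.Nonempty :=
    ⟨_, _, isABSystem_powersetCard (by rw [card_union_of_disjoint hAB]; simpa), rfl⟩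
  obtain ⟨Q, hQ, hQf⟩ := Nat.sInf_mem hne
  have := hQ.le_twelve_mul_card hAB (by simpa using ha) (by simpa using hb)
  simp only [card_range, Nat.card_Ico, add_tsub_cancel_left] at this
  rwa [fAB, ← hQf]

theorem f_lower_odd_b (a b : ℕ) (ha : a % 6 = 0 ∨ a % 6 = 2) (hb : Odd b) :
    ((b : ℚ) - 1) * ((2 * (a : ℚ)^2 - a) / 12) + (coverNum a : ℚ) ≤ (fAB a b : ℚ) := by
  have hC := twelve_mul_coverNum_le ha
  -- for `a = 2`, `b = 1` there is no system at all, and `fAB 2 1 = coverNum 2 = 0`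
  obtain rfl | ⟨rfl, rfl⟩ | ⟨ha0, hab⟩ : a = 0 ∨ (a = 2 ∧ b = 1) ∨ (0 < a ∧ 4 ≤ a + b) := by
    obtain ⟨k, rfl⟩ := hb
    omega
  · simp [show coverNum 0 = 0 by simpa using hC]
  · simp [coverNum_two]
  · have hf := le_twelve_mul_fAB ha hb hab
    generalize (if a % 6 = 2 then 4 else 0) = ε at hC hf
    have hCq : (12 * coverNum a : ℚ) ≤ 2 * a ^ 2 + ε := by exact_mod_cast hC
    have hfq := (Nat.cast_le (α := ℚ)).2 hf
    push_cast [Nat.cast_sub (by omega : 1 ≤ 2 * a)] at hfq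
    linarith
end

section
/- If b ≤ λ(a,3), where λ(a,3) is the maximum number of pairwise disjoint optimal (a,3,2)-covering designs on a common a-element set, then f(a,b) ≤ binom(a,3). -/
open Finset

/-- `λ(a,3)`: the maximum number of pairwise disjoint optimal `(a,3,2)`-coverings
on a common `a`-element set. -/
noncomputable def lambdaNum (a : ℕ) : ℕ :=
  sSup {m | ∃ Ts : Fin m → Finset (Finset ℕ),
    (∀ i, IsCover (Finset.range a) (Ts i) ∧ (Ts i).card = coverNum a) ∧
    (∀ i j, i ≠ j → Disjoint (Ts i) (Ts j))}

lemma fAB_le_of_system (a b : ℕ) (Q : Finset (Finset ℕ))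
    (hQ : IsABSystem (Finset.range a) (Finset.Ico a (a + b)) Q) : fAB a b ≤ Q.card :=
  Nat.sInf_le ⟨Q, hQ, rfl⟩

lemma lambda_exists (a b : ℕ) (hb : b ≤ lambdaNum a) :
    ∃ Ts : Fin b → Finset (Finset ℕ),
      (∀ i, IsCover (Finset.range a) (Ts i) ∧ (Ts i).card = coverNum a) ∧
      (∀ i j, i ≠ j → Disjoint (Ts i) (Ts j)) := by
  set S := {m | ∃ Ts : Fin m → Finset (Finset ℕ),
    (∀ i, IsCover (Finset.range a) (Ts i) ∧ (Ts i).card = coverNum a) ∧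
    (∀ i j, i ≠ j → Disjoint (Ts i) (Ts j))} with hS
  have hdown : ∀ m ∈ S, ∀ k, k ≤ m → k ∈ S := by
    rintro m ⟨Ts, h1, h2⟩ k hk
    exact ⟨fun i => Ts (Fin.castLE hk i), fun i => h1 _, fun i j hij =>
      h2 _ _ (fun h => hij (Fin.ext (by simpa using congrArg Fin.val h)))⟩
  have hmem : b ∈ S := by
    by_cases hB : BddAbove S
    · have h0 : (0 : ℕ) ∈ S := ⟨fun i => i.elim0, fun i => i.elim0, fun i => i.elim0⟩
      exact hdown _ (Nat.sSup_mem ⟨0, h0⟩ hB) b hb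
    · obtain ⟨m, hm, hbm⟩ := not_bddAbove_iff.mp hB b
      exact hdown _ hm b hbm.le
  exact hmem

theorem f_upper_lambda (a b : ℕ) (hb : b ≤ lambdaNum a) : fAB a b ≤ a.choose 3 := by
  classical
  rcases Nat.eq_zero_or_pos b with rfl | hbpos
  · -- b = 0
    rcases lt_or_ge a 3 with ha | ha3
    · -- a ≤ 2 : the empty system works
      have h0 : fAB a 0 ≤ (∅ : Finset (Finset ℕ)).card := by
        apply fAB_le_of_system
        constructor
        · intro q hq; simp at hq
        · intro T hT hT3 _
          exfalso
          have hle := Finset.card_le_card hT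
          have hcard : (Finset.range a ∪ Finset.Ico a (a + 0)).card ≤ a := by
            refine le_trans (Finset.card_union_le _ _) ?_
            simp
          omega
      simp only [Finset.card_empty] at h0
      omega
    rcases eq_or_lt_of_le ha3 with ha3' | ha4
    · -- a = 3 : no system exists at all
      have hempty : {n | ∃ Q : Finset (Finset ℕ),
          IsABSystem (Finset.range a) (Finset.Ico a (a + 0)) Q ∧ Q.card = n} = ∅ := by
        ext n
        simp only [Set.mem_setOf_eq, Set.mem_empty_iff_false, iff_false]
        rintro ⟨Q, ⟨hQ1, hQ2⟩, rfl⟩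
        have hT : Finset.range a ⊆ Finset.range a ∪ Finset.Ico a (a + 0) :=
          Finset.subset_union_left
        obtain ⟨q, hq, hsub⟩ := hQ2 (Finset.range a) hT (by simp [← ha3'])
          (by simp [← ha3'])
        obtain ⟨hq1, hq2⟩ := hQ1 q hq
        have : q.card ≤ 3 := by
          have := Finset.card_le_card hq1
          have hc : (Finset.range a ∪ Finset.Ico a (a + 0)).card ≤ a :=
            le_trans (Finset.card_union_le _ _) (by simp)
          omega
        omega
      have : fAB a 0 = 0 := by
        unfold fAB
        rw [hempty, Nat.sInf_empty]
      omega
    · -- 4 ≤ a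
      set g : Finset ℕ → Finset ℕ := fun t =>
        if h : (Finset.range a \ t).Nonempty then insert ((Finset.range a \ t).min' h) t
        else t with hg
      set Q := ((Finset.range a).powersetCard 3).image g with hQdef
      have hmem : ∀ t ∈ (Finset.range a).powersetCard 3,
          ∃ x, x ∈ Finset.range a \ t ∧ g t = insert x t := by
        intro t ht
        rw [Finset.mem_powersetCard] at ht
        have hne : (Finset.range a \ t).Nonempty := by
          rw [← Finset.card_pos, Finset.card_sdiff_of_subset ht.1, Finset.card_range, ht.2]; omega
        exact ⟨_, Finset.min'_mem _ hne, dif_pos hne⟩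
      refine le_trans (fAB_le_of_system a 0 Q ⟨?_, ?_⟩) ?_
      · rintro q hq
        rw [hQdef, Finset.mem_image] at hq
        obtain ⟨t, ht, rfl⟩ := hq
        obtain ⟨x, hx, hgt⟩ := hmem t ht
        rw [Finset.mem_powersetCard] at ht
        rw [Finset.mem_sdiff] at hx
        constructor
        · rw [hgt]
          intro y hy
          rw [Finset.mem_insert] at hy
          rcases hy with rfl | hy
          · exact Finset.mem_union_left _ hx.1
          · exact Finset.mem_union_left _ (ht.1 hy)
        · rw [hgt, Finset.card_insert_of_notMem hx.2, ht.2]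
      · intro T hT hT3 _
        have hTA : T ⊆ Finset.range a := by
          intro y hy
          have h := hT hy
          rw [Finset.mem_union] at h
          rcases h with h | h
          · exact h
          · rw [Finset.mem_Ico] at h; omega
        have hTmem : T ∈ (Finset.range a).powersetCard 3 :=
          Finset.mem_powersetCard.mpr ⟨hTA, hT3⟩
        refine ⟨g T, Finset.mem_image_of_mem _ hTmem, ?_⟩
        obtain ⟨x, hx, hgt⟩ := hmem T hTmem
        rw [hgt]
        exact Finset.subset_insert _ _
      · calc Q.card ≤ ((Finset.range a).powersetCard 3).card := Finset.card_image_le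
          _ = a.choose 3 := by rw [Finset.card_powersetCard, Finset.card_range]
  · -- b ≥ 1
    obtain ⟨Ts, hTs, hdisj⟩ := lambda_exists a b hb
    set idx : Finset ℕ → ℕ := fun t =>
      if h : ∃ i : Fin b, t ∈ Ts i then ((h.choose : Fin b) : ℕ) else 0 with hidxdef
    have hidxlt : ∀ t, idx t < b := by
      intro t
      rw [hidxdef]
      dsimp only
      split
      · exact Fin.is_lt _
      · exact hbpos
    have hidx : ∀ (j : Fin b) (t : Finset ℕ), t ∈ Ts j → idx t = (j : ℕ) := by
      intro j t ht
      have h : ∃ i : Fin b, t ∈ Ts i := ⟨j, ht⟩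
      rw [hidxdef]
      dsimp only
      rw [dif_pos h]
      have hc := h.choose_spec
      by_contra hne
      have hne' : h.choose ≠ j := fun he => hne (congrArg Fin.val he)
      exact Finset.disjoint_left.mp (hdisj _ _ hne') hc ht
    set g : Finset ℕ → Finset ℕ := fun t => insert (a + idx t) t with hg
    set Q := ((Finset.range a).powersetCard 3).image g with hQdef
    have hgprop : ∀ t ∈ (Finset.range a).powersetCard 3,
        (g t ⊆ Finset.range a ∪ Finset.Ico a (a + b)) ∧ (g t).card = 4 := by
      intro t ht
      rw [Finset.mem_powersetCard] at ht
      have hnotmem : a + idx t ∉ t := by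
        intro hmm
        have := ht.1 hmm
        rw [Finset.mem_range] at this
        omega
      constructor
      · intro y hy
        rw [hg] at hy
        dsimp only at hy
        rw [Finset.mem_insert] at hy
        rcases hy with rfl | hy
        · exact Finset.mem_union_right _ (Finset.mem_Ico.mpr ⟨Nat.le_add_right _ _,
            by have := hidxlt t; omega⟩)
        · exact Finset.mem_union_left _ (ht.1 hy)
      · rw [hg]
        dsimp only
        rw [Finset.card_insert_of_notMem hnotmem, ht.2]
    refine le_trans (fAB_le_of_system a b Q ⟨?_, ?_⟩) ?_
    · intro q hq
      rw [hQdef, Finset.mem_image] at hq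
      obtain ⟨t, ht, rfl⟩ := hq
      exact hgprop t ht
    · intro T hT hT3 hT2
      have hsplit := Finset.card_inter_add_card_sdiff T (Finset.range a)
      have hinter_le : (T ∩ Finset.range a).card ≤ 3 := by
        rw [← hT3]; exact Finset.card_le_card Finset.inter_subset_left
      rcases eq_or_lt_of_le hinter_le with h3 | h2
      · -- T ⊆ A
        have hTA : T ⊆ Finset.range a := by
          have hdiff : (T \ Finset.range a).card = 0 := by omega
          rw [Finset.card_eq_zero, Finset.sdiff_eq_empty_iff_subset] at hdiff
          exact hdiff
        have hTmem : T ∈ (Finset.range a).powersetCard 3 :=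
          Finset.mem_powersetCard.mpr ⟨hTA, hT3⟩
        refine ⟨g T, Finset.mem_image_of_mem _ hTmem, ?_⟩
        rw [hg]
        exact Finset.subset_insert _ _
      · -- |T ∩ A| = 2
        have hinter2 : (T ∩ Finset.range a).card = 2 := by omega
        have hdiff1 : (T \ Finset.range a).card = 1 := by omega
        obtain ⟨y, hy⟩ := Finset.card_eq_one.mp hdiff1
        have hyT : y ∈ T \ Finset.range a := by rw [hy]; exact Finset.mem_singleton_self y
        rw [Finset.mem_sdiff] at hyT
        have hyB : y ∈ Finset.Ico a (a + b) := by
          have h := hT hyT.1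
          rw [Finset.mem_union] at h
          rcases h with h | h
          · exact absurd h hyT.2
          · exact h
        rw [Finset.mem_Ico] at hyB
        set j : Fin b := ⟨y - a, by omega⟩ with hj
        obtain ⟨⟨hfam, hcov⟩, _⟩ := hTs j
        obtain ⟨t, htj, hPt⟩ := hcov (T ∩ Finset.range a) Finset.inter_subset_right hinter2
        obtain ⟨htA, ht3⟩ := hfam t htj
        have htmem : t ∈ (Finset.range a).powersetCard 3 :=
          Finset.mem_powersetCard.mpr ⟨htA, ht3⟩
        refine ⟨g t, Finset.mem_image_of_mem _ htmem, ?_⟩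
        have hgty : g t = insert y t := by
          rw [hg]
          dsimp only
          rw [hidx j t htj]
          congr 1
          rw [hj]
          dsimp only
          omega
        rw [hgty]
        intro x hx
        by_cases hxA : x ∈ Finset.range a
        · exact Finset.mem_insert_of_mem (hPt (Finset.mem_inter.mpr ⟨hx, hxA⟩))
        · have : x ∈ T \ Finset.range a := Finset.mem_sdiff.mpr ⟨hx, hxA⟩
          rw [hy, Finset.mem_singleton] at this
          rw [this]
          exact Finset.mem_insert_self _ _
    · calc Q.card ≤ ((Finset.range a).powersetCard 3).card := Finset.card_image_le
        _ = a.choose 3 := by rw [Finset.card_powersetCard, Finset.card_range]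
end

section
/- Let A and B be disjoint sets with |A| = a, |B| = b, and let Q be a family of 4-element subsets of A ∪ B such that every 3-element subset of A is contained in some member of Q. For each pair {x', x''} ⊆ A, let U(x',x'') be the set of y ∈ B such that {x',x'',y} is contained in no member of Q. Then f(a,b) ≤ |Q| + Σ_{pairs {x',x''} ⊆ A} ceil(|U(x',x'')|/2). -/
open Finset

lemma fAB_le_of_system_s10 {α : Type*} [DecidableEq α] (a b : ℕ) (A B : Finset α)
    (hd : Disjoint A B) (hA : A.card = a) (hB : B.card = b) (Q : Finset (Finset α))
    (hQ : IsABSystem A B Q) : fAB a b ≤ Q.card := by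
  classical
  have hA' : A.card = (Finset.range a).card := by simp [hA]
  have hB' : B.card = (Finset.Ico a (a + b)).card := by simp [hB]
  let eA := Finset.equivOfCardEq hA'
  let eB := Finset.equivOfCardEq hB'
  set f : α → ℕ := fun x =>
    if h : x ∈ A then (eA ⟨x, h⟩ : ℕ) else if h : x ∈ B then (eB ⟨x, h⟩ : ℕ) else a + b
    with hf
  have hfA : ∀ x ∈ A, f x ∈ Finset.range a := by
    intro x hx; simp only [hf, dif_pos hx]; exact (eA ⟨x, hx⟩).2
  have hfB : ∀ x ∈ B, f x ∈ Finset.Ico a (a + b) := by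
    intro x hx
    have hxA : x ∉ A := fun h => (Finset.disjoint_left.mp hd h) hx
    simp only [hf, dif_neg hxA, dif_pos hx]; exact (eB ⟨x, hx⟩).2
  have hdisj : ∀ n, n ∈ Finset.range a → n ∈ Finset.Ico a (a + b) → False := by
    intro n h1 h2; rw [Finset.mem_range] at h1; rw [Finset.mem_Ico] at h2; omega
  have hinj : Set.InjOn f ↑(A ∪ B) := by
    intro x hx y hy hxy
    simp only [Finset.coe_union, Set.mem_union, Finset.mem_coe] at hx hy
    have hBA : ∀ z ∈ B, z ∉ A := fun z hz h => (Finset.disjoint_left.mp hd h) hz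
    rcases hx with hx | hx <;> rcases hy with hy | hy
    · have h1 : eA ⟨x, hx⟩ = eA ⟨y, hy⟩ := Subtype.coe_injective (by
        simpa only [hf, dif_pos hx, dif_pos hy] using hxy)
      exact Subtype.mk_eq_mk.mp (eA.injective h1)
    · exact absurd hxy (by
        intro h
        exact hdisj _ (hfA x hx) (h ▸ hfB y hy))
    · exact absurd hxy.symm (by
        intro h
        exact hdisj _ (hfA y hy) (h ▸ hfB x hx))
    · have h1 : eB ⟨x, hx⟩ = eB ⟨y, hy⟩ := Subtype.coe_injective (by
        simpa only [hf, dif_neg (hBA x hx), dif_pos hx, dif_neg (hBA y hy), dif_pos hy]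
          using hxy)
      exact Subtype.mk_eq_mk.mp (eB.injective h1)
  have hsubU : ∀ x ∈ A ∪ B, f x ∈ Finset.range a ∪ Finset.Ico a (a + b) := by
    intro x hx
    rcases Finset.mem_union.mp hx with h | h
    · exact Finset.mem_union_left _ (hfA x h)
    · exact Finset.mem_union_right _ (hfB x h)
  have himg : (A ∪ B).image f = Finset.range a ∪ Finset.Ico a (a + b) := by
    apply Finset.eq_of_subset_of_card_le
    · intro n hn
      obtain ⟨x, hx, rfl⟩ := Finset.mem_image.mp hn
      exact hsubU x hx
    · rw [Finset.card_image_of_injOn hinj]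
      rw [Finset.card_union_of_disjoint hd, hA, hB]
      have : Disjoint (Finset.range a) (Finset.Ico a (a + b)) :=
        Finset.disjoint_left.mpr fun n h1 h2 => hdisj n h1 h2
      rw [Finset.card_union_of_disjoint this]
      simp
  have key : IsABSystem (Finset.range a) (Finset.Ico a (a + b)) (Q.image (Finset.image f)) := by
    constructor
    · intro q' hq'
      obtain ⟨q, hq, rfl⟩ := Finset.mem_image.mp hq'
      obtain ⟨hsub, hcard⟩ := hQ.1 q hq
      constructor
      · rw [← himg]; exact Finset.image_subset_image hsub
      · rw [Finset.card_image_of_injOn (hinj.mono (by exact_mod_cast hsub)), hcard]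
    · intro T' hT' hcard3 hint
      set T : Finset α := (A ∪ B).filter (fun x => f x ∈ T') with hT
      have hTsub : T ⊆ A ∪ B := Finset.filter_subset _ _
      have hTimg : T.image f = T' := by
        apply Finset.eq_of_subset_of_card_le
        · intro n hn
          obtain ⟨x, hx, rfl⟩ := Finset.mem_image.mp hn
          exact (Finset.mem_filter.mp hx).2
        · calc T'.card ≤ (T.image f).card := by
                apply Finset.card_le_card
                intro t ht
                have : t ∈ (A ∪ B).image f := himg ▸ hT' ht
                obtain ⟨x, hx, rfl⟩ := Finset.mem_image.mp this
                exact Finset.mem_image_of_mem f (Finset.mem_filter.mpr ⟨hx, ht⟩)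
              _ = (T.image f).card := rfl
      have hTinj : Set.InjOn f ↑T := hinj.mono (by exact_mod_cast hTsub)
      have hTcard : T.card = 3 := by
        rw [← hcard3, ← hTimg, Finset.card_image_of_injOn hTinj]
      have hTA : 2 ≤ (T ∩ A).card := by
        have hsub2 : T' ∩ Finset.range a ⊆ (T ∩ A).image f := by
          intro t ht
          obtain ⟨ht', hta⟩ := Finset.mem_inter.mp ht
          have : t ∈ T.image f := hTimg ▸ ht'
          obtain ⟨x, hx, rfl⟩ := Finset.mem_image.mp this
          have hxA : x ∈ A := by
            rcases Finset.mem_union.mp (hTsub hx) with h | h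
            · exact h
            · exact absurd hta (fun hta => hdisj _ hta (hfB x h))
          exact Finset.mem_image_of_mem f (Finset.mem_inter.mpr ⟨hx, hxA⟩)
        calc 2 ≤ (T' ∩ Finset.range a).card := hint
          _ ≤ ((T ∩ A).image f).card := Finset.card_le_card hsub2
          _ ≤ (T ∩ A).card := Finset.card_image_le
      obtain ⟨q, hq, hTq⟩ := hQ.2 T hTsub hTcard hTA
      exact ⟨q.image f, Finset.mem_image_of_mem _ hq, hTimg ▸ Finset.image_subset_image hTq⟩
  calc fAB a b ≤ (Q.image (Finset.image f)).card :=
        Nat.sInf_le ⟨Q.image (Finset.image f), key, rfl⟩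
    _ ≤ Q.card := Finset.card_image_le

lemma aux_ind {α : Type*} [DecidableEq α] (a b : ℕ) (hab : 4 ≤ a + b) (A B : Finset α)
    (hd : Disjoint A B) (hA : A.card = a) (hB : B.card = b) :
    ∀ n : ℕ, ∀ Q : Finset (Finset α),
      (∀ q ∈ Q, q ⊆ A ∪ B ∧ q.card = 4) →
      (∀ T ⊆ A, T.card = 3 → ∃ q ∈ Q, T ⊆ q) →
      ∑ p ∈ A.powersetCard 2, (B.filter fun y => ∀ q ∈ Q, ¬ insert y p ⊆ q).card = n →
      fAB a b ≤ Q.card + ∑ p ∈ A.powersetCard 2,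
        ((B.filter fun y => ∀ q ∈ Q, ¬ insert y p ⊆ q).card + 1) / 2 := by
  intro n
  induction n using Nat.strong_induction_on with
  | _ n IH =>
    intro Q hQ4 hcov hsum
    rcases Nat.eq_zero_or_pos n with hn0 | hnpos
    · -- all uncovered sets empty: Q is a system
      subst hn0
      have hempty : ∀ p ∈ A.powersetCard 2,
          (B.filter fun y => ∀ q ∈ Q, ¬ insert y p ⊆ q) = ∅ := by
        intro p hp
        have := (Finset.sum_eq_zero_iff.mp hsum) p hp
        exact Finset.card_eq_zero.mp this
      have hsys : IsABSystem A B Q := by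
        refine ⟨hQ4, ?_⟩
        intro T hT hc3 hc2
        by_cases h3 : (T ∩ A).card = 3
        · have hTA : T ∩ A = T :=
            Finset.eq_of_subset_of_card_le Finset.inter_subset_left (by omega)
          refine hcov T ?_ hc3
          rw [← hTA]; exact Finset.inter_subset_right
        · have h2 : (T ∩ A).card = 2 := by
            have : (T ∩ A).card ≤ 3 := hc3 ▸ Finset.card_le_card Finset.inter_subset_left
            omega
          have hp : T ∩ A ∈ A.powersetCard 2 :=
            Finset.mem_powersetCard.mpr ⟨Finset.inter_subset_right, h2⟩
          have hsd : (T \ A).card = 1 := by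
            have := Finset.card_inter_add_card_sdiff T A
            omega
          obtain ⟨y, hy⟩ := Finset.card_eq_one.mp hsd
          have hyT : y ∈ T \ A := hy ▸ Finset.mem_singleton_self y
          have hyB : y ∈ B := by
            rcases Finset.mem_union.mp (hT (Finset.mem_sdiff.mp hyT).1) with h | h
            · exact absurd h (Finset.mem_sdiff.mp hyT).2
            · exact h
          have hins : insert y (T ∩ A) = T := by
            rw [Finset.insert_eq, Finset.union_comm, ← hy]
            ext x
            simp only [Finset.mem_union, Finset.mem_inter, Finset.mem_sdiff]
            tauto
          have hnot : y ∉ (B.filter fun y => ∀ q ∈ Q, ¬ insert y (T ∩ A) ⊆ q) := by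
            rw [hempty _ hp]; exact Finset.notMem_empty y
          rw [Finset.mem_filter] at hnot
          push_neg at hnot
          obtain ⟨q, hq, hsub⟩ := hnot hyB
          exact ⟨q, hq, hins ▸ hsub⟩
      exact le_trans (fAB_le_of_system_s10 a b A B hd hA hB Q hsys) (Nat.le_add_right _ _)
    · -- there is an uncovered pair; add a quadruple covering (at least) one uncovered y
      obtain ⟨p₀, hp₀mem, hp₀ne⟩ : ∃ p ∈ A.powersetCard 2,
          (B.filter fun y => ∀ q ∈ Q, ¬ insert y p ⊆ q).card ≠ 0 := by
        by_contra h
        push_neg at h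
        rw [Finset.sum_eq_zero (fun p hp => h p hp)] at hsum
        omega
      set U₀ := B.filter fun y => ∀ q ∈ Q, ¬ insert y p₀ ⊆ q with hU₀
      obtain ⟨hp₀A, hp₀c⟩ := Finset.mem_powersetCard.mp hp₀mem
      obtain ⟨y, hyU⟩ := Finset.card_pos.mp (Nat.pos_of_ne_zero hp₀ne)
      have hyB : y ∈ B := (Finset.mem_filter.mp hyU).1
      have hyunc : ∀ q ∈ Q, ¬ insert y p₀ ⊆ q := (Finset.mem_filter.mp hyU).2
      have hynp : y ∉ p₀ := fun h => (Finset.disjoint_left.mp hd (hp₀A h)) hyB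
      have hins3 : (insert y p₀).card = 3 := by
        rw [Finset.card_insert_of_notMem hynp, hp₀c]
      have hinsAB : insert y p₀ ⊆ A ∪ B :=
        Finset.insert_subset (Finset.mem_union_right _ hyB)
          (hp₀A.trans Finset.subset_union_left)
      -- choose the fourth element z
      obtain ⟨z, hzAB, hznotin, hcase⟩ : ∃ z, z ∈ A ∪ B ∧ z ∉ insert y p₀ ∧
          (z ∈ U₀ ∨ U₀ = {y}) := by
        by_cases h2 : ∃ y' ∈ U₀, y' ≠ y
        · obtain ⟨z, hzU, hzy⟩ := h2
          have hzB : z ∈ B := (Finset.mem_filter.mp hzU).1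
          refine ⟨z, Finset.mem_union_right _ hzB, ?_, Or.inl hzU⟩
          intro h
          rcases Finset.mem_insert.mp h with h | h
          · exact hzy h
          · exact (Finset.disjoint_left.mp hd (hp₀A h)) hzB
        · push_neg at h2
          have hUy : U₀ = {y} := by
            apply Finset.eq_singleton_iff_unique_mem.mpr
            exact ⟨hyU, fun x hx => h2 x hx⟩
          have hne : ((A ∪ B) \ insert y p₀).Nonempty := by
            apply Finset.card_pos.mp
            rw [Finset.card_sdiff_of_subset hinsAB, Finset.card_union_of_disjoint hd, hA, hB, hins3]
            omega
          obtain ⟨z, hz⟩ := hne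
          obtain ⟨hz1, hz2⟩ := Finset.mem_sdiff.mp hz
          exact ⟨z, hz1, hz2, Or.inr hUy⟩
      set q₀ := insert z (insert y p₀) with hq₀
      have hq₀card : q₀.card = 4 := by
        rw [hq₀, Finset.card_insert_of_notMem hznotin, hins3]
      have hq₀AB : q₀ ⊆ A ∪ B := Finset.insert_subset hzAB hinsAB
      have hq₀notQ : q₀ ∉ Q := fun h => hyunc q₀ h (Finset.subset_insert _ _)
      set Q' := insert q₀ Q with hQ'
      have hQ'card : Q'.card = Q.card + 1 := Finset.card_insert_of_notMem hq₀notQ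
      have hQ4' : ∀ q ∈ Q', q ⊆ A ∪ B ∧ q.card = 4 := by
        intro q hq
        rcases Finset.mem_insert.mp hq with rfl | hq
        · exact ⟨hq₀AB, hq₀card⟩
        · exact hQ4 q hq
      have hcov' : ∀ T ⊆ A, T.card = 3 → ∃ q ∈ Q', T ⊆ q := by
        intro T hT hc
        obtain ⟨q, hq, hsub⟩ := hcov T hT hc
        exact ⟨q, Finset.mem_insert_of_mem hq, hsub⟩
      have hUsub : ∀ p, (B.filter fun y => ∀ q ∈ Q', ¬ insert y p ⊆ q) ⊆
          (B.filter fun y => ∀ q ∈ Q, ¬ insert y p ⊆ q) := by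
        intro p t ht
        rw [Finset.mem_filter] at ht ⊢
        exact ⟨ht.1, fun q hq => ht.2 q (Finset.mem_insert_of_mem hq)⟩
      have hynotU' : y ∉ (B.filter fun t => ∀ q ∈ Q', ¬ insert t p₀ ⊆ q) := by
        rw [Finset.mem_filter]
        rintro ⟨-, h⟩
        exact h q₀ (Finset.mem_insert_self _ _) (Finset.subset_insert _ _)
      have hUlt : (B.filter fun t => ∀ q ∈ Q', ¬ insert t p₀ ⊆ q).card < U₀.card := by
        apply Finset.card_lt_card
        rw [Finset.ssubset_iff_of_subset (hUsub p₀)]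
        exact ⟨y, hyU, hynotU'⟩
      set m := ∑ p ∈ A.powersetCard 2,
        (B.filter fun y => ∀ q ∈ Q', ¬ insert y p ⊆ q).card with hm
      have hmlt : m < n := by
        rw [hm, ← hsum]
        apply Finset.sum_lt_sum
        · exact fun p _ => Finset.card_le_card (hUsub p)
        · exact ⟨p₀, hp₀mem, hUlt⟩
      have hIH := IH m hmlt Q' hQ4' hcov' rfl
      refine le_trans hIH ?_
      rw [hQ'card]
      -- it suffices to compare the sums
      have hkey : ∑ p ∈ A.powersetCard 2,
            ((B.filter fun y => ∀ q ∈ Q', ¬ insert y p ⊆ q).card + 1) / 2 + 1 ≤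
          ∑ p ∈ A.powersetCard 2,
            ((B.filter fun y => ∀ q ∈ Q, ¬ insert y p ⊆ q).card + 1) / 2 := by
        rw [← Finset.sum_erase_add _ _ hp₀mem, ← Finset.sum_erase_add _ _ hp₀mem]
        have hrest : ∑ p ∈ (A.powersetCard 2).erase p₀,
              ((B.filter fun y => ∀ q ∈ Q', ¬ insert y p ⊆ q).card + 1) / 2 ≤
            ∑ p ∈ (A.powersetCard 2).erase p₀,
              ((B.filter fun y => ∀ q ∈ Q, ¬ insert y p ⊆ q).card + 1) / 2 := by
          apply Finset.sum_le_sum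
          intro p _
          exact Nat.div_le_div_right (by
            have := Finset.card_le_card (hUsub p); omega)
        have hterm : ((B.filter fun t => ∀ q ∈ Q', ¬ insert t p₀ ⊆ q).card + 1) / 2 + 1 ≤
            ((B.filter fun t => ∀ q ∈ Q, ¬ insert t p₀ ⊆ q).card + 1) / 2 := by
          rcases hcase with hzU | hU1
          · -- two distinct uncovered elements y, z are now covered
            have hzy : z ≠ y := fun h => hznotin (h ▸ Finset.mem_insert_self _ _)
            have hsub2 : (B.filter fun t => ∀ q ∈ Q', ¬ insert t p₀ ⊆ q) ⊆
                U₀ \ {y, z} := by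
              intro t ht
              rw [Finset.mem_sdiff]
              refine ⟨hUsub p₀ ht, ?_⟩
              intro htm
              rw [Finset.mem_filter] at ht
              rcases Finset.mem_insert.mp htm with rfl | htm
              · exact ht.2 q₀ (Finset.mem_insert_self _ _) (Finset.subset_insert _ _)
              · rw [Finset.mem_singleton] at htm
                subst htm
                exact ht.2 q₀ (Finset.mem_insert_self _ _)
                  (Finset.insert_subset (Finset.mem_insert_self _ _)
                    ((Finset.subset_insert _ _).trans (Finset.subset_insert _ _)))
            have hyz : ({y, z} : Finset α) ⊆ U₀ := by
              intro t ht
              rcases Finset.mem_insert.mp ht with rfl | ht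
              · exact hyU
              · rw [Finset.mem_singleton] at ht; subst ht; exact hzU
            have hyzcard : ({y, z} : Finset α).card = 2 := by
              rw [Finset.card_insert_of_notMem (by simp [Ne.symm hzy]), Finset.card_singleton]
            have h1 : (B.filter fun t => ∀ q ∈ Q', ¬ insert t p₀ ⊆ q).card ≤
                U₀.card - 2 := by
              calc _ ≤ (U₀ \ {y, z}).card := Finset.card_le_card hsub2
                _ = U₀.card - 2 := by rw [Finset.card_sdiff_of_subset hyz, hyzcard]
            have h2 : 2 ≤ U₀.card := hyzcard ▸ Finset.card_le_card hyz
            have hrw : (B.filter fun t => ∀ q ∈ Q, ¬ insert t p₀ ⊆ q) = U₀ := rfl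
            rw [hrw]
            omega
          · -- U₀ = {y}, now everything covered
            have h1 : (B.filter fun t => ∀ q ∈ Q', ¬ insert t p₀ ⊆ q).card = 0 := by
              rw [Finset.card_eq_zero]
              rw [Finset.eq_empty_iff_forall_notMem]
              intro t ht
              have htU : t ∈ U₀ := hUsub p₀ ht
              rw [hU1, Finset.mem_singleton] at htU
              subst htU
              exact hynotU' ht
            have h2 : U₀.card = 1 := by rw [hU1]; exact Finset.card_singleton y
            rw [h1]
            rw [show (B.filter fun t => ∀ q ∈ Q, ¬ insert t p₀ ⊆ q) = U₀ from rfl, h2]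
        omega
      omega

theorem f_upper_pairs {α : Type*} [DecidableEq α] (a b : ℕ) (A B : Finset α)
    (hd : Disjoint A B) (hA : A.card = a) (hB : B.card = b)
    (Q : Finset (Finset α))
    (hQ4 : ∀ q ∈ Q, q ⊆ A ∪ B ∧ q.card = 4)
    (hcov : ∀ T ⊆ A, T.card = 3 → ∃ q ∈ Q, T ⊆ q) :
    fAB a b ≤ Q.card + ∑ p ∈ A.powersetCard 2,
      ((B.filter fun y => ∀ q ∈ Q, ¬ insert y p ⊆ q).card + 1) / 2 := by
  classical
  by_cases hab : 4 ≤ a + b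
  · exact aux_ind a b hab A B hd hA hB _ Q hQ4 hcov rfl
  · push_neg at hab
    by_cases ha1 : a ≤ 1
    · have h0 : fAB a b ≤ 0 := by
        apply Nat.sInf_le
        refine ⟨∅, ⟨by simp, ?_⟩, rfl⟩
        intro T _ _ h2
        exfalso
        have : (T ∩ Finset.range a).card ≤ a := by
          calc (T ∩ Finset.range a).card ≤ (Finset.range a).card :=
                Finset.card_le_card Finset.inter_subset_right
            _ = a := Finset.card_range a
        omega
      exact le_trans h0 (Nat.zero_le _)
    · rcases (by omega : (a = 2 ∧ b = 0) ∨ (a = 2 ∧ b = 1) ∨ (a = 3 ∧ b = 0)) with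
        ⟨rfl, rfl⟩ | ⟨rfl, rfl⟩ | ⟨rfl, rfl⟩
      · -- a = 2, b = 0 : empty system works
        have h0 : fAB 2 0 ≤ 0 := by
          apply Nat.sInf_le
          refine ⟨∅, ⟨by simp, ?_⟩, rfl⟩
          intro T hT h3 _
          exfalso
          have : T.card ≤ (Finset.range 2 ∪ Finset.Ico 2 (2 + 0)).card :=
            Finset.card_le_card hT
          rw [show (Finset.range 2 ∪ Finset.Ico 2 (2 + 0)).card = 2 from by decide] at this
          omega
        exact le_trans h0 (Nat.zero_le _)
      · -- a = 2, b = 1 : no system exists, so fAB 2 1 = sInf ∅ = 0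
        have hempty : {n | ∃ Q : Finset (Finset ℕ),
            IsABSystem (Finset.range 2) (Finset.Ico 2 (2 + 1)) Q ∧ Q.card = n} = ∅ := by
          ext n
          simp only [Set.mem_setOf_eq, Set.mem_empty_iff_false, iff_false, not_exists]
          rintro Q' ⟨⟨hq4, hcov'⟩, -⟩
          obtain ⟨q, hq, hTq⟩ := hcov' {0, 1, 2} (by decide) (by decide) (by decide)
          obtain ⟨hqsub, hqcard⟩ := hq4 q hq
          have h2 : q ⊆ ({0, 1, 2} : Finset ℕ) := by
            rwa [show (Finset.range 2 ∪ Finset.Ico 2 (2 + 1)) = ({0, 1, 2} : Finset ℕ)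
              from by decide] at hqsub
          have : q.card ≤ 3 := by
            calc q.card ≤ ({0, 1, 2} : Finset ℕ).card := Finset.card_le_card h2
              _ = 3 := by decide
          omega
        have h0 : fAB 2 1 = 0 := by
          unfold fAB
          rw [hempty, Nat.sInf_empty]
        rw [h0]
        exact Nat.zero_le _
      · -- a = 3, b = 0 : hypotheses are contradictory
        exfalso
        have hB0 : B = ∅ := Finset.card_eq_zero.mp hB
        obtain ⟨q, hq, hAq⟩ := hcov A subset_rfl hA
        obtain ⟨hqsub, hqcard⟩ := hQ4 q hq
        rw [hB0, Finset.union_empty] at hqsub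
        have : q.card ≤ A.card := Finset.card_le_card hqsub
        omega
end

section
/- For every positive integer a, f(a, a) ≤ (a³ − a)/6 = binom(a+1, 3). -/
open Finset

/-- Block covering a triple: the triple plus one extra `B`-element. -/
def block3 (a : ℕ) (t : Finset ℕ) : Finset ℕ := t ∪ {a + t.sum id % a}

/-- Block covering a pair: the pair plus two extra `B`-elements. -/
def block2 (a : ℕ) (p : Finset ℕ) : Finset ℕ :=
  p ∪ p.image (fun x => a + (p.sum id + x) % a)

def ABQ (a : ℕ) : Finset (Finset ℕ) :=
  (((Finset.range a).powersetCard 3).image (block3 a)) ∪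
  (((Finset.range a).powersetCard 2).image (block2 a))

lemma two_choose_two (n : ℕ) : 2 * n.choose 2 = n * (n - 1) := by
  induction n with
  | zero => rfl
  | succ n ih =>
    rw [Nat.choose_succ_succ, Nat.choose_one_right]
    cases n with
    | zero => rfl
    | succ m => simp only [Nat.succ_sub_one] at *; nlinarith [ih]

lemma six_choose_three (n : ℕ) : 6 * (n + 1).choose 3 = n ^ 3 - n := by
  induction n with
  | zero => rfl
  | succ n ih =>
    have h2 : 2 * (n + 1).choose 2 = (n + 1) * n := by
      simpa using two_choose_two (n + 1)
    have hn : n ≤ n ^ 3 := Nat.le_self_pow (by norm_num) n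
    have hn' : n + 1 ≤ (n + 1) ^ 3 := Nat.le_self_pow (by norm_num) _
    rw [Nat.choose_succ_succ (n + 1), Nat.mul_add, ih]
    zify [hn, hn']
    have h2' : (2 : ℤ) * (n + 1).choose 2 = (n + 1) * n := by exact_mod_cast h2
    nlinarith [h2']

lemma memB (a : ℕ) (ha : 0 < a) (x : ℕ) : a + x % a ∈ Finset.Ico a (a + a) := by
  have := Nat.mod_lt x ha
  simp [Finset.mem_Ico]; omega

lemma block3_spec (a : ℕ) (ha : 0 < a) (t : Finset ℕ)
    (ht : t ∈ (Finset.range a).powersetCard 3) :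
    block3 a t ⊆ Finset.range a ∪ Finset.Ico a (a + a) ∧ (block3 a t).card = 4 := by
  rw [Finset.mem_powersetCard] at ht
  obtain ⟨hsub, hcard⟩ := ht
  constructor
  · intro x hx
    rw [block3, Finset.mem_union] at hx
    rcases hx with hx | hx
    · exact Finset.mem_union_left _ (hsub hx)
    · simp only [Finset.mem_singleton] at hx
      subst hx
      exact Finset.mem_union_right _ (memB a ha _)
  · rw [block3, Finset.card_union_of_disjoint, hcard, Finset.card_singleton]
    rw [Finset.disjoint_singleton_right]
    intro hmem
    have := hsub hmem
    rw [Finset.mem_range] at this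
    omega

lemma block2_spec (a : ℕ) (ha : 0 < a) (p : Finset ℕ)
    (hp : p ∈ (Finset.range a).powersetCard 2) :
    block2 a p ⊆ Finset.range a ∪ Finset.Ico a (a + a) ∧ (block2 a p).card = 4 := by
  rw [Finset.mem_powersetCard] at hp
  obtain ⟨hsub, hcard⟩ := hp
  have hlt : ∀ x ∈ p, x < a := fun x hx => Finset.mem_range.mp (hsub hx)
  constructor
  · intro x hx
    rw [block2, Finset.mem_union] at hx
    rcases hx with hx | hx
    · exact Finset.mem_union_left _ (hsub hx)
    · rw [Finset.mem_image] at hx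
      obtain ⟨y, _, rfl⟩ := hx
      exact Finset.mem_union_right _ (memB a ha _)
  · rw [block2, Finset.card_union_of_disjoint, hcard,
      Finset.card_image_of_injOn, hcard]
    · intro x hx y hy hxy
      simp only at hxy
      have hx' := hlt x hx
      have hy' := hlt y hy
      have : (p.sum id + x) % a = (p.sum id + y) % a := by omega
      have : x % a = y % a :=
        Nat.ModEq.add_left_cancel' (p.sum id) this
      rwa [Nat.mod_eq_of_lt hx', Nat.mod_eq_of_lt hy'] at this
    · rw [Finset.disjoint_left]
      intro x hx hx'
      rw [Finset.mem_image] at hx'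
      obtain ⟨y, _, hy⟩ := hx'
      have := hlt x hx
      omega


lemma ABQ_system (a : ℕ) (ha : 0 < a) :
    IsABSystem (Finset.range a) (Finset.Ico a (a + a)) (ABQ a) := by
  constructor
  · intro q hq
    rw [ABQ, Finset.mem_union] at hq
    rcases hq with hq | hq <;> rw [Finset.mem_image] at hq
    · obtain ⟨t, ht, rfl⟩ := hq
      exact block3_spec a ha t ht
    · obtain ⟨p, hp, rfl⟩ := hq
      exact block2_spec a ha p hp
  · intro T hT hT3 hT2
    set p := T ∩ Finset.range a with hp
    have hpT : p ⊆ T := Finset.inter_subset_left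
    have hpsub : p ⊆ Finset.range a := Finset.inter_subset_right
    have hple : p.card ≤ 3 := le_trans (Finset.card_le_card hpT) hT3.le
    rcases eq_or_lt_of_le hple with h3 | h2
    · -- |T ∩ A| = 3, so T ⊆ A
      have hTp : p = T := Finset.eq_of_subset_of_card_le hpT (by omega)
      have hTsub : T ⊆ Finset.range a := hTp ▸ hpsub
      refine ⟨block3 a T, ?_, Finset.subset_union_left⟩
      exact Finset.mem_union_left _ (Finset.mem_image.mpr
        ⟨T, Finset.mem_powersetCard.mpr ⟨hTsub, hT3⟩, rfl⟩)
    · have hp2 : p.card = 2 := by omega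
      have hsd : (T \ p).card = 1 := by
        rw [Finset.card_sdiff_of_subset hpT]; omega
      obtain ⟨b, hb⟩ := Finset.card_eq_one.mp hsd
      have hbsd : b ∈ T \ p := hb ▸ Finset.mem_singleton_self b
      have hbT : b ∈ T := (Finset.mem_sdiff.mp hbsd).1
      have hbp : b ∉ p := (Finset.mem_sdiff.mp hbsd).2
      have hbA : b ∉ Finset.range a := fun h =>
        hbp (Finset.mem_inter.mpr ⟨hbT, h⟩)
      have hbB : b ∈ Finset.Ico a (a + a) := by
        rcases Finset.mem_union.mp (hT hbT) with h | h
        · exact absurd h hbA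
        · exact h
      have hTeq : T = {b} ∪ p := by rw [← hb, Finset.sdiff_union_of_subset hpT]
      obtain ⟨hab, hba⟩ := Finset.mem_Ico.mp hbB
      set m := b - a with hmdef
      have hma : m < a := by omega
      have hbm : b = a + m := by omega
      set s := p.sum id with hs
      obtain ⟨i, j, hij, hpij⟩ := Finset.card_eq_two.mp hp2
      have hsum : s = i + j := by rw [hs, hpij, Finset.sum_pair hij]; rfl
      by_cases hci : m = (s + i) % a ∨ m = (s + j) % a
      · -- covered by a pair block
        refine ⟨block2 a p, ?_, ?_⟩
        · exact Finset.mem_union_right _ (Finset.mem_image.mpr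
            ⟨p, Finset.mem_powersetCard.mpr ⟨hpsub, hp2⟩, rfl⟩)
        · rw [hTeq]
          apply Finset.union_subset
          · rw [Finset.singleton_subset_iff, block2]
            apply Finset.mem_union_right
            rw [Finset.mem_image]
            rcases hci with hci | hci
            · exact ⟨i, by rw [hpij]; simp, by rw [← hs, ← hci, ← hbm]⟩
            · exact ⟨j, by rw [hpij]; simp, by rw [← hs, ← hci, ← hbm]⟩
          · exact Finset.subset_union_left
      · push_neg at hci
        set k := (a + m - s % a) % a with hk
        have hka : k < a := Nat.mod_lt _ ha
        have hsa : s % a < a := Nat.mod_lt _ ha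
        have hmod : (s + k) % a = m := by
          calc (s + k) % a = (s % a + k) % a := (Nat.mod_add_mod s a k).symm
            _ = (s % a + (a + m - s % a)) % a := Nat.add_mod_mod _ _ _
            _ = (a + m) % a := by congr 1; omega
            _ = m := by rw [Nat.add_mod_left]; exact Nat.mod_eq_of_lt hma
        have hki : k ≠ i := fun h => hci.1 (by rw [← hmod, h])
        have hkj : k ≠ j := fun h => hci.2 (by rw [← hmod, h])
        have hkp : k ∉ p := by rw [hpij]; simp [hki, hkj]
        have ht3 : (insert k p).card = 3 := by
          rw [Finset.card_insert_of_notMem hkp, hp2]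
        have htsub : insert k p ⊆ Finset.range a :=
          Finset.insert_subset (Finset.mem_range.mpr hka) hpsub
        have hts : (insert k p).sum id = k + s := by
          rw [Finset.sum_insert hkp]; rfl
        refine ⟨block3 a (insert k p), ?_, ?_⟩
        · exact Finset.mem_union_left _ (Finset.mem_image.mpr
            ⟨insert k p, Finset.mem_powersetCard.mpr ⟨htsub, ht3⟩, rfl⟩)
        · rw [hTeq]
          apply Finset.union_subset
          · rw [Finset.singleton_subset_iff, block3]
            apply Finset.mem_union_right
            rw [Finset.mem_singleton, hts, hbm]
            congr 1
            rw [Nat.add_comm k s, hmod]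
          · exact subset_trans (Finset.subset_insert k p)
              (Finset.subset_union_left)

theorem f_upper_S34 (a : ℕ) (ha : 0 < a) :
    fAB a a ≤ (a ^ 3 - a) / 6 ∧ (a ^ 3 - a) / 6 = (a + 1).choose 3 := by
  have h6 := six_choose_three a
  have harith : (a ^ 3 - a) / 6 = (a + 1).choose 3 := by omega
  refine ⟨?_, harith⟩
  rw [harith]
  have hle : fAB a a ≤ (ABQ a).card :=
    Nat.sInf_le ⟨ABQ a, ABQ_system a ha, rfl⟩
  refine hle.trans ?_
  have hcard : (ABQ a).card ≤ a.choose 3 + a.choose 2 := by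
    refine (Finset.card_union_le _ _).trans ?_
    have h1 : (((Finset.range a).powersetCard 3).image (block3 a)).card ≤ a.choose 3 := by
      refine (Finset.card_image_le).trans ?_
      rw [Finset.card_powersetCard, Finset.card_range]
    have h2 : (((Finset.range a).powersetCard 2).image (block2 a)).card ≤ a.choose 2 := by
      refine (Finset.card_image_le).trans ?_
      rw [Finset.card_powersetCard, Finset.card_range]
    omega
  have hpascal : (a + 1).choose 3 = a.choose 2 + a.choose 3 := Nat.choose_succ_succ a 2
  omega
end
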